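/- arXiv:math/0001076 — 3 statements merged into one kernel-verified Lean document; each statement's English description precedes it below -/
import Mathlib

section
/- Let (X,d) be a complete separable metric space, D_1 ⊆ D_2 ⊆ ... Borel subsets with dense union, and f_n : D_n → ℝ measurable with sup_n sup_{d ∈ D_n} |f_n(d)| ≤ B < ∞. If condition [C] holds (f_n(d_n) converges whenever d_n ∈ D_n converge in X), then condition [A] holds: whenever μ_n ∈ P(X) with μ_n(X \ D_n) = 0 and μ_n → μ weakly, the sequence ∫_X f_n dμ_n converges — indeed to ∫_X f dμ, where f is the continuous limit function determined by [C]. -/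
open MeasureTheory Filter Topology BoundedContinuousFunction

/-- On a complete separable metric space, for uniformly bounded `f_n`, condition [C] implies
condition [A]: along any weakly convergent sequence of laws `μ_n` supported on `D_n`, the
integrals `∫ f_n dμ_n` converge to `∫ f dμ`, where `f` is the continuous limit function
determined by [C]. -/
theorem stmt13 {X : Type*} [MetricSpace X] [CompleteSpace X]
    [TopologicalSpace.SeparableSpace X] [MeasurableSpace X] [BorelSpace X]
    (D : ℕ → Set X) (hmono : Monotone D) (hmeas : ∀ n, MeasurableSet (D n))
    (hdense : Dense (⋃ n, D n)) (f : ℕ → X → ℝ)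
    (hfmeas : ∀ n, Measurable fun d : D n => f n d)
    (B : ℝ) (hB : ∀ n, ∀ d ∈ D n, |f n d| ≤ B)
    (hC : ∀ (d : ℕ → X) (x : X), (∀ n, d n ∈ D n) → Tendsto d atTop (𝓝 x) →
      ∃ L, Tendsto (fun n => f n (d n)) atTop (𝓝 L)) :
    ∃ g : X → ℝ, Continuous g ∧
      (∀ (d : ℕ → X) (x : X), (∀ n, d n ∈ D n) → Tendsto d atTop (𝓝 x) →
        Tendsto (fun n => f n (d n)) atTop (𝓝 (g x))) ∧
      ∀ (μ : ℕ → Measure X) (ν : Measure X), (∀ n, IsProbabilityMeasure (μ n)) →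
        IsProbabilityMeasure ν → (∀ n, μ n (D n)ᶜ = 0) →
        (∀ h : X →ᵇ ℝ, Tendsto (fun n => ∫ x, h x ∂ (μ n)) atTop (𝓝 (∫ x, h x ∂ ν))) →
        Tendsto (fun n => ∫ x, f n x ∂ (μ n)) atTop (𝓝 (∫ x, g x ∂ ν)) := by
  by_cases hne : ∀ n, (D n).Nonempty
  swap
  · -- vacuous case: some `D n` is empty
    push_neg at hne
    obtain ⟨n₀, hn₀⟩ := hne
    refine ⟨0, continuous_const, ?_, ?_⟩
    · intro d x hd _
      exact absurd (hd n₀) (by simp [hn₀])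
    · intro μ ν hμ hν hsupp _
      exfalso
      have h1 : μ n₀ Set.univ = 1 := (hμ n₀).measure_univ
      have h2 : μ n₀ (D n₀)ᶜ = 0 := hsupp n₀
      rw [hn₀, Set.compl_empty] at h2
      simp [h2] at h1
  -- Main case
  have hBnn : 0 ≤ B := le_trans (abs_nonneg _) (hB 0 _ (hne 0).choose_spec)
  -- infimum distances tend to zero
  have hinf : ∀ x : X, Tendsto (fun n => Metric.infDist x (D n)) atTop (𝓝 0) := by
    intro x
    rw [Metric.tendsto_atTop]
    intro ε hε
    obtain ⟨y, hy, hyd⟩ := Metric.mem_closure_iff.mp (hdense x) ε hε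
    obtain ⟨m, hm⟩ := Set.mem_iUnion.mp hy
    refine ⟨m, fun n hn => ?_⟩
    have h1 : Metric.infDist x (D n) ≤ dist x y :=
      Metric.infDist_le_dist_of_mem (hmono hn hm)
    have h0 : 0 ≤ Metric.infDist x (D n) := Metric.infDist_nonneg
    rw [Real.dist_eq, sub_zero, abs_of_nonneg h0]
    exact lt_of_le_of_lt h1 hyd
  -- approximating sequences
  have hseq : ∀ (x : X) (n : ℕ), ∃ y ∈ D n,
      dist x y < Metric.infDist x (D n) + 1 / (n + 1) := by
    intro x n
    refine (Metric.infDist_lt_iff (hne n)).mp ?_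
    exact lt_add_of_pos_right _ (by positivity)
  choose seq hseqD hseqdist using hseq
  have hseqtend : ∀ x, Tendsto (fun n => seq x n) atTop (𝓝 x) := by
    intro x
    rw [tendsto_iff_dist_tendsto_zero]
    apply squeeze_zero (fun n => dist_nonneg)
      (g := fun n => Metric.infDist x (D n) + 1 / (n + 1))
    · intro n
      rw [dist_comm]
      exact (hseqdist x n).le
    · have := (hinf x).add tendsto_one_div_add_atTop_nhds_zero_nat
      simpa using this
  -- the limit function
  choose g hg using fun x => hC (seq x) x (hseqD x) (hseqtend x)
  -- subsequence version of condition [C] with identified limit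
  have hsub : ∀ (φ : ℕ → ℕ), StrictMono φ → ∀ (d : ℕ → X) (x : X),
      (∀ k, d k ∈ D (φ k)) → Tendsto d atTop (𝓝 x) →
      Tendsto (fun k => f (φ k) (d k)) atTop (𝓝 (g x)) := by
    intro φ hφ d x hd hdx
    classical
    set e : ℕ → X := fun n => if h : ∃ k, φ k = n then d h.choose else seq x n with he_def
    have he : ∀ n, e n ∈ D n := by
      intro n
      dsimp only [e]
      split_ifs with h
      · have := hd h.choose
        rwa [h.choose_spec] at this
      · exact hseqD x n
    have he_comp : ∀ k, e (φ k) = d k := by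
      intro k
      have h : ∃ k', φ k' = φ k := ⟨k, rfl⟩
      dsimp only [e]
      rw [dif_pos h]
      congr 1
      exact hφ.injective h.choose_spec
    have hetend : Tendsto e atTop (𝓝 x) := by
      rw [Metric.tendsto_atTop]
      intro ε hε
      obtain ⟨N₁, hN₁⟩ := Metric.tendsto_atTop.mp (hseqtend x) ε hε
      obtain ⟨K, hK⟩ := Metric.tendsto_atTop.mp hdx ε hε
      refine ⟨max N₁ (φ K), fun n hn => ?_⟩
      dsimp only [e]
      split_ifs with h
      · have hk : K ≤ h.choose := by
          rw [← hφ.le_iff_le, h.choose_spec]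
          exact le_trans (le_max_right _ _) hn
        exact hK _ hk
      · exact hN₁ n (le_trans (le_max_left _ _) hn)
    obtain ⟨L, hL⟩ := hC e x he hetend
    -- identify L with g x via interleaving with seq x
    have hLgx : L = g x := by
      set e2 : ℕ → X := fun n => if Even n then e n else seq x n with he2_def
      have he2 : ∀ n, e2 n ∈ D n := by
        intro n; dsimp only [e2]; split_ifs
        · exact he n
        · exact hseqD x n
      have he2tend : Tendsto e2 atTop (𝓝 x) := by
        rw [Metric.tendsto_atTop]
        intro ε hε
        obtain ⟨N₁, hN₁⟩ := Metric.tendsto_atTop.mp (hseqtend x) ε hε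
        obtain ⟨N₂, hN₂⟩ := Metric.tendsto_atTop.mp hetend ε hε
        refine ⟨max N₁ N₂, fun n hn => ?_⟩
        dsimp only [e2]
        split_ifs
        · exact hN₂ n (le_trans (le_max_right _ _) hn)
        · exact hN₁ n (le_trans (le_max_left _ _) hn)
      obtain ⟨L2, hL2⟩ := hC e2 x he2 he2tend
      have hmul2 : StrictMono (fun m : ℕ => 2 * m) := by intro a b hab; simpa using hab
      have hmul2' : StrictMono (fun m : ℕ => 2 * m + 1) := by
        intro a b hab; simp only []; omega
      have heven : Tendsto (fun m => f (2 * m) (e2 (2 * m))) atTop (𝓝 L2) :=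
        hL2.comp hmul2.tendsto_atTop
      have heven' : Tendsto (fun m => f (2 * m) (e (2 * m))) atTop (𝓝 L) :=
        hL.comp hmul2.tendsto_atTop
      have heq : (fun m => f (2 * m) (e2 (2 * m))) = fun m => f (2 * m) (e (2 * m)) := by
        funext m
        have : Even (2 * m) := even_two_mul m
        simp only [e2, if_pos this]
      rw [heq] at heven
      have hLL2 : L = L2 := tendsto_nhds_unique heven' heven
      have hodd : Tendsto (fun m => f (2 * m + 1) (e2 (2 * m + 1))) atTop (𝓝 L2) :=
        hL2.comp hmul2'.tendsto_atTop
      have hodd' : Tendsto (fun m => f (2 * m + 1) (seq x (2 * m + 1))) atTop (𝓝 (g x)) :=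
        (hg x).comp hmul2'.tendsto_atTop
      have heq2 : (fun m => f (2 * m + 1) (e2 (2 * m + 1)))
          = fun m => f (2 * m + 1) (seq x (2 * m + 1)) := by
        funext m
        have : ¬ Even (2 * m + 1) := by simp [Nat.even_add_one]
        simp only [e2, if_neg this]
      rw [heq2] at hodd
      rw [hLL2]
      exact tendsto_nhds_unique hodd hodd'
    have : Tendsto (fun k => f (φ k) (e (φ k))) atTop (𝓝 L) := hL.comp hφ.tendsto_atTop
    rw [hLgx] at this
    convert this using 2 with k
    rw [he_comp k]
  have hgB : ∀ x, |g x| ≤ B := fun x =>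
    le_of_tendsto (hg x).abs (Eventually.of_forall fun n => hB n _ (hseqD x n))
  have hgcont : Continuous g := by
    rw [continuous_iff_seqContinuous]
    intro u x hux
    have hpick : ∀ k : ℕ, ∃ᶠ n in atTop, |f n (seq (u k) n) - g (u k)| < 1 / (k + 1) ∧
        dist (seq (u k) n) (u k) < 1 / (k + 1) := by
      intro k
      have hk : (0:ℝ) < 1 / (k + 1) := by positivity
      have h1 : ∀ᶠ n in atTop, |f n (seq (u k) n) - g (u k)| < 1 / (k + 1) := by
        have := Metric.tendsto_atTop.mp (hg (u k)) _ hk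
        obtain ⟨N, hN⟩ := this
        exact eventually_atTop.mpr ⟨N, fun n hn => by
          have := hN n hn; rwa [Real.dist_eq] at this⟩
      have h2 : ∀ᶠ n in atTop, dist (seq (u k) n) (u k) < 1 / (k + 1) := by
        obtain ⟨N, hN⟩ := Metric.tendsto_atTop.mp (hseqtend (u k)) _ hk
        exact eventually_atTop.mpr ⟨N, fun n hn => hN n hn⟩
      exact (h1.and h2).frequently
    obtain ⟨φ, hφ, hφP⟩ := extraction_forall_of_frequently hpick
    set d : ℕ → X := fun k => seq (u k) (φ k) with hd_def
    have hdD : ∀ k, d k ∈ D (φ k) := fun k => hseqD (u k) (φ k)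
    have hdx : Tendsto d atTop (𝓝 x) := by
      rw [tendsto_iff_dist_tendsto_zero]
      apply squeeze_zero (fun k => dist_nonneg)
        (g := fun k => 1 / (k + 1) + dist (u k) x)
      · intro k
        calc dist (d k) x ≤ dist (d k) (u k) + dist (u k) x := dist_triangle _ _ _
        _ ≤ 1 / (k + 1) + dist (u k) x :=
          add_le_add_left (hφP k).2.le _
      · have h2 : Tendsto (fun k => dist (u k) x) atTop (𝓝 0) :=
          tendsto_iff_dist_tendsto_zero.mp hux
        have := tendsto_one_div_add_atTop_nhds_zero_nat.add h2
        simpa using this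
    have hmain : Tendsto (fun k => f (φ k) (d k)) atTop (𝓝 (g x)) := hsub φ hφ d x hdD hdx
    have hdiff : Tendsto (fun k => f (φ k) (d k) - g (u k)) atTop (𝓝 0) := by
      apply squeeze_zero_norm (a := fun k : ℕ => 1 / (k + 1))
      · intro k
        rw [Real.norm_eq_abs]
        exact (hφP k).1.le
      · exact tendsto_one_div_add_atTop_nhds_zero_nat
    have := hmain.sub hdiff
    simp only [sub_sub_cancel, sub_zero] at this
    exact this
  -- uniform convergence on compact sets
  have hunif : ∀ (K : Set X), IsCompact K → ∀ ε > (0:ℝ),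
      ∀ᶠ n in atTop, ∀ y ∈ D n ∩ K, |f n y - g y| < ε := by
    intro K hK ε hε
    by_contra hcon
    rw [Filter.not_eventually] at hcon
    have hcon' : ∃ᶠ n in atTop, ∃ y, y ∈ D n ∩ K ∧ ε ≤ |f n y - g y| := by
      apply hcon.mono
      intro n hn
      push_neg at hn
      obtain ⟨y, hy1, hy2⟩ := hn
      exact ⟨y, hy1, hy2⟩
    obtain ⟨φ, hφ, hφP⟩ := extraction_of_frequently_atTop hcon'
    choose y hyDK hyε using hφP
    have hyK : ∀ k, y k ∈ K := fun k => (hyDK k).2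
    obtain ⟨x, hxK, ψ, hψ, hyψ⟩ := hK.tendsto_subseq hyK
    have hmain : Tendsto (fun j => f (φ (ψ j)) (y (ψ j))) atTop (𝓝 (g x)) :=
      hsub (φ ∘ ψ) (hφ.comp hψ) (fun j => y (ψ j)) x (fun j => (hyDK (ψ j)).1) hyψ
    have hgy : Tendsto (fun j => g (y (ψ j))) atTop (𝓝 (g x)) :=
      (hgcont.tendsto x).comp hyψ
    have hdiff : Tendsto (fun j => f (φ (ψ j)) (y (ψ j)) - g (y (ψ j))) atTop (𝓝 0) := by
      have := hmain.sub hgy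
      simpa using this
    obtain ⟨N, hN⟩ := Metric.tendsto_atTop.mp hdiff ε hε
    have := hN N le_rfl
    rw [Real.dist_eq, sub_zero] at this
    exact absurd this (not_lt.mpr (hyε (ψ N)))
  refine ⟨g, hgcont, fun d x hd hdx => hsub id strictMono_id d x hd hdx, ?_⟩
  intro μ ν hμ hν hsupp hweak
  -- uniform tightness
  have hXne : Nonempty X := ⟨(hne 0).choose⟩
  obtain ⟨u, hu⟩ := TopologicalSpace.exists_dense_seq X
  set P : ℕ → ProbabilityMeasure X := fun n => ⟨μ n, hμ n⟩ with hP_def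
  set Pν : ProbabilityMeasure X := ⟨ν, hν⟩ with hPν_def
  have hPtend : Tendsto P atTop (𝓝 Pν) := by
    rw [ProbabilityMeasure.tendsto_iff_forall_integral_tendsto]
    intro h
    exact hweak h
  set U : ℕ → ℕ → Set X :=
    fun k m => ⋃ i ∈ Finset.range (m + 1), Metric.ball (u i) (1 / (k + 1)) with hU_def
  have hUopen : ∀ k m, IsOpen (U k m) := fun k m => isOpen_biUnion fun i _ => Metric.isOpen_ball
  have hUmono : ∀ k, Monotone (U k) := by
    intro k a b hab
    apply Set.iUnion₂_subset
    intro i hi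
    have hib : i ∈ Finset.range (b + 1) := by
      rw [Finset.mem_range] at hi ⊢
      omega
    intro z hz
    exact Set.mem_iUnion₂.mpr ⟨i, hib, hz⟩
  have hUuniv : ∀ k, ⋃ m, U k m = Set.univ := by
    intro k
    ext z
    simp only [Set.mem_iUnion, Set.mem_univ, iff_true]
    have hk : (0:ℝ) < 1 / (k + 1) := by positivity
    obtain ⟨w, hw, hwd⟩ := Metric.mem_closure_iff.mp (hu z) _ hk
    obtain ⟨i, rfl⟩ := hw
    refine ⟨i, Set.mem_biUnion (Finset.self_mem_range_succ i) ?_⟩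
    rw [Metric.mem_ball]
    exact hwd
  have hind : ∀ (ρ : Measure X), IsProbabilityMeasure ρ → ∀ (k : ℕ) (δ : ENNReal), 0 < δ →
      ∃ m, ρ (U k m)ᶜ < δ := by
    intro ρ hρ k δ hδ
    have hmeasc : ∀ m, MeasureTheory.NullMeasurableSet (U k m)ᶜ ρ :=
      fun m => ((hUopen k m).measurableSet.compl).nullMeasurableSet
    have hanti : Antitone fun m => (U k m)ᶜ :=
      fun a b hab => Set.compl_subset_compl.mpr (hUmono k hab)
    have htend := tendsto_measure_iInter_atTop hmeasc hanti ⟨0, measure_ne_top ρ _⟩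
    have hint : ⋂ m, (U k m)ᶜ = ∅ := by
      rw [← Set.compl_iUnion, hUuniv k, Set.compl_univ]
    rw [hint, measure_empty] at htend
    obtain ⟨m, hm⟩ := (htend.eventually_lt_const hδ).exists
    exact ⟨m, hm⟩
  have hunifm : ∀ (k : ℕ) (δ : ENNReal), 0 < δ → ∃ m, ∀ n, μ n (U k m)ᶜ ≤ δ := by
    intro k δ hδ
    obtain ⟨m₀, hm₀⟩ := hind ν hν k δ hδ
    have hport : atTop.limsup (fun n => μ n (U k m₀)ᶜ) ≤ ν (U k m₀)ᶜ :=
      ProbabilityMeasure.limsup_measure_closed_le_of_tendsto hPtend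
        (hUopen k m₀).isClosed_compl
    have hev : ∀ᶠ n in atTop, μ n (U k m₀)ᶜ < δ :=
      eventually_lt_of_limsup_lt (lt_of_le_of_lt hport hm₀)
    obtain ⟨N, hN⟩ := eventually_atTop.mp hev
    choose ms hms using fun n => hind (μ n) (hμ n) k δ hδ
    refine ⟨max m₀ ((Finset.range N).sup ms), fun n => ?_⟩
    rcases le_or_gt N n with h | h
    · exact le_trans (measure_mono (Set.compl_subset_compl.mpr
        (hUmono k (le_max_left _ _)))) (hN n h).le
    · have hmsle : ms n ≤ max m₀ ((Finset.range N).sup ms) :=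
        le_trans (Finset.le_sup (Finset.mem_range.mpr h)) (le_max_right _ _)
      exact le_trans (measure_mono (Set.compl_subset_compl.mpr
        (hUmono k hmsle))) (hms n).le
  have htight : ∀ ε : ℝ, 0 < ε → ∃ K : Set X, IsCompact K ∧
      ∀ n, μ n Kᶜ ≤ ENNReal.ofReal ε := by
    intro ε hε
    classical
    have hδpos : ∀ k : ℕ, (0:ENNReal) < ENNReal.ofReal (ε / 2) * 2⁻¹ ^ k := by
      intro k
      apply ENNReal.mul_pos
      · simp [ENNReal.ofReal_pos, half_pos hε]
      · exact (ENNReal.pow_pos (by simp) k).ne'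
    choose m hm using fun k => hunifm k _ (hδpos k)
    set S : Set X := ⋂ k, U k (m k) with hS_def
    have htb : TotallyBounded S := by
      rw [Metric.totallyBounded_iff]
      intro ε0 hε0
      obtain ⟨k, hk⟩ := exists_nat_one_div_lt hε0
      refine ⟨↑((Finset.range (m k + 1)).image u), Set.toFinite _, ?_⟩
      intro z hz
      have hzU : z ∈ U k (m k) := Set.mem_iInter.mp hz k
      obtain ⟨i, hi, hzb⟩ := Set.mem_iUnion₂.mp hzU
      refine Set.mem_iUnion₂.mpr ⟨u i, ?_, ?_⟩
      · simp only [Finset.coe_image, Set.mem_image, Finset.mem_coe]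
        exact ⟨i, hi, rfl⟩
      · rw [Metric.mem_ball] at hzb ⊢
        exact lt_trans hzb hk
    refine ⟨closure S, TotallyBounded.isCompact_of_isClosed htb.closure isClosed_closure,
      fun n => ?_⟩
    have hsub1 : (closure S)ᶜ ⊆ ⋃ k, (U k (m k))ᶜ := by
      rw [← Set.compl_iInter]
      exact Set.compl_subset_compl.mpr subset_closure
    calc μ n (closure S)ᶜ ≤ μ n (⋃ k, (U k (m k))ᶜ) := measure_mono hsub1
    _ ≤ ∑' k, μ n (U k (m k))ᶜ := measure_iUnion_le _
    _ ≤ ∑' k : ℕ, ENNReal.ofReal (ε / 2) * 2⁻¹ ^ k := ENNReal.tsum_le_tsum fun k => hm k n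
    _ = ENNReal.ofReal (ε / 2) * 2 := by
        rw [ENNReal.tsum_mul_left, ENNReal.tsum_geometric, ENNReal.one_sub_inv_two, inv_inv]
    _ ≤ ENNReal.ofReal ε := by
        rw [show (2:ENNReal) = ENNReal.ofReal 2 by simp,
          ← ENNReal.ofReal_mul (by linarith)]
        apply ENNReal.ofReal_le_ofReal
        linarith
  -- conclusion
  classical
  set gb : X →ᵇ ℝ := BoundedContinuousFunction.ofNormedAddCommGroup g hgcont B
      (fun x => by rw [Real.norm_eq_abs]; exact hgB x) with hgb_def
  have hweakg : Tendsto (fun n => ∫ x, g x ∂ μ n) atTop (𝓝 (∫ x, g x ∂ ν)) := hweak gb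
  set F : ℕ → X → ℝ := fun n x => if h : x ∈ D n then f n x else g x with hF_def
  have hFmeas : ∀ n, Measurable (F n) :=
    fun n => Measurable.dite (hfmeas n) (hgcont.measurable.comp measurable_subtype_coe) (hmeas n)
  have hFae : ∀ n, f n =ᵐ[μ n] F n := by
    intro n
    have hD : D n ∈ ae (μ n) := by rw [mem_ae_iff]; exact hsupp n
    filter_upwards [hD] with x hx
    simp [F, hx]
  have hFB : ∀ n x, |F n x| ≤ B := by
    intro n x
    dsimp only [F]
    split_ifs with h
    · exact hB n x h
    · exact hgB x
  have hFint : ∀ n, Integrable (F n) (μ n) := by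
    intro n
    refine Integrable.mono' (integrable_const B) (hFmeas n).aestronglyMeasurable ?_
    exact Eventually.of_forall fun x => by rw [Real.norm_eq_abs]; exact hFB n x
  have hgint : ∀ n, Integrable g (μ n) := fun n => gb.integrable (μ n)
  have heqint : ∀ n, ∫ x, f n x ∂ μ n = ∫ x, F n x ∂ μ n :=
    fun n => integral_congr_ae (hFae n)
  have hdiff : Tendsto (fun n => ∫ x, F n x ∂ μ n - ∫ x, g x ∂ μ n) atTop (𝓝 0) := by
    rw [NormedAddCommGroup.tendsto_nhds_zero]
    intro ε hε
    set ε₁ := ε / (8 * (B + 1)) with hε₁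
    have hε₁pos : 0 < ε₁ := by positivity
    obtain ⟨K, hKcomp, hKle⟩ := htight ε₁ hε₁pos
    filter_upwards [hunif K hKcomp (ε / 4) (by positivity)] with n hn
    have hint1 : Integrable (fun x => F n x - g x) (μ n) := (hFint n).sub (hgint n)
    rw [show ∫ x, F n x ∂ μ n - ∫ x, g x ∂ μ n = ∫ x, (F n x - g x) ∂ μ n by
      rw [integral_sub (hFint n) (hgint n)]]
    rw [← integral_add_compl hKcomp.measurableSet hint1]
    have htr1 : (μ n K).toReal ≤ 1 := by
      have h1 : μ n K ≤ 1 := prob_le_one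
      have := ENNReal.toReal_mono ENNReal.one_ne_top h1
      simpa using this
    have htr2 : (μ n Kᶜ).toReal ≤ ε₁ :=
      ENNReal.toReal_le_of_le_ofReal hε₁pos.le (hKle n)
    have h1 : ‖∫ x in K, (F n x - g x) ∂ μ n‖ ≤ (ε / 4) * (μ n K).toReal := by
      apply norm_setIntegral_le_of_norm_le_const (measure_lt_top _ _)
      intro x hx
      rw [Real.norm_eq_abs]
      dsimp only [F]
      split_ifs with h
      · exact (hn x ⟨h, hx⟩).le
      · simpa using by positivity
    have h2 : ‖∫ x in Kᶜ, (F n x - g x) ∂ μ n‖ ≤ (2 * B) * (μ n Kᶜ).toReal := by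
      apply norm_setIntegral_le_of_norm_le_const (measure_lt_top _ _)
      intro x _
      rw [Real.norm_eq_abs]
      calc |F n x - g x| ≤ |F n x| + |g x| := abs_sub _ _
      _ ≤ B + B := add_le_add (hFB n x) (hgB x)
      _ = 2 * B := by ring
    have hmulpos : (0:ℝ) ≤ (μ n K).toReal := ENNReal.toReal_nonneg
    have hmulpos2 : (0:ℝ) ≤ (μ n Kᶜ).toReal := ENNReal.toReal_nonneg
    have ha : ε₁ * (8 * (B + 1)) = ε := div_mul_cancel₀ _ (by positivity)
    calc ‖∫ x in K, (F n x - g x) ∂ μ n + ∫ x in Kᶜ, (F n x - g x) ∂ μ n‖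
        ≤ ‖∫ x in K, (F n x - g x) ∂ μ n‖ + ‖∫ x in Kᶜ, (F n x - g x) ∂ μ n‖ :=
          norm_add_le _ _
      _ ≤ (ε / 4) * (μ n K).toReal + (2 * B) * (μ n Kᶜ).toReal := add_le_add h1 h2
      _ < ε := by nlinarith [mul_nonneg hBnn hε₁pos.le, mul_nonneg hBnn hmulpos2]
  have hcomb : Tendsto (fun n => (∫ x, F n x ∂ μ n - ∫ x, g x ∂ μ n) + ∫ x, g x ∂ μ n)
      atTop (𝓝 (0 + ∫ x, g x ∂ ν)) := hdiff.add hweakg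
  rw [zero_add] at hcomb
  have heq : (fun n => ∫ x, f n x ∂ μ n)
      = fun n => (∫ x, F n x ∂ μ n - ∫ x, g x ∂ μ n) + ∫ x, g x ∂ μ n := by
    funext n
    rw [heqint n]
    ring
  rw [heq]
  exact hcomb
end

section
/- Let S be a complete separable metric space and T a separable metric space, and let F : P(S) → P(T) be continuous for the weak topologies. Define Markov transitions K_n(s,·) := F(ε_n(s))^{⊗n} on T^n for s ∈ S^n. Then {K_n} propagates chaos: whenever {ρ_n}, symmetric laws on S^n, is p-chaotic, the laws ∫_{S^n} K_n(s,·) ρ_n(ds) on T^n form an F(p)-chaotic sequence. -/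
open MeasureTheory Filter Topology BoundedContinuousFunction
open scoped ENNReal NNReal

noncomputable def avgDirac {α β : Type*} [Fintype α] [MeasurableSpace β] (g : α → β) :
    Measure β :=
  ((Fintype.card α : ℝ≥0∞))⁻¹ • ∑ a : α, Measure.dirac (g a)

instance {α β : Type*} [Fintype α] [Nonempty α] [MeasurableSpace β] (g : α → β) :
    IsProbabilityMeasure (avgDirac g) := by
  constructor
  simp [avgDirac, Measure.finset_sum_apply, ENNReal.inv_mul_cancel,
    Fintype.card_ne_zero]

noncomputable def empiricalMeasure {S : Type*} [MeasurableSpace S] {n : ℕ} (s : Fin n → S) :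
    Measure S :=
  avgDirac s

instance {S : Type*} [MeasurableSpace S] {n : ℕ} [NeZero n] (s : Fin n → S) :
    IsProbabilityMeasure (empiricalMeasure s) := by
  have : Nonempty (Fin n) := Fin.pos_iff_nonempty.mp (Nat.pos_of_ne_zero (NeZero.ne n))
  unfold empiricalMeasure
  infer_instance

noncomputable def empiricalPM {S : Type*} [MeasurableSpace S] (n : ℕ) [NeZero n]
    (s : Fin n → S) : ProbabilityMeasure S :=
  ⟨empiricalMeasure s, inferInstance⟩

def IsSymmetricLaw {S : Type*} [MeasurableSpace S] {n : ℕ} (μ : Measure (Fin n → S)) : Prop :=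
  ∀ π : Equiv.Perm (Fin n), Measure.map (fun s => s ∘ π) μ = μ

/-- Kac's condition: `ρ` is `p`-chaotic. -/
def IsChaotic {S : Type*} [MeasurableSpace S] [TopologicalSpace S]
    (ρ : ∀ n, Measure (Fin n → S)) (p : Measure S) : Prop :=
  ∀ (k : ℕ) (φ : Fin k → (S →ᵇ ℝ)),
    Tendsto
      (fun n => ∫ s, ∏ i : Fin k, φ i (s (Fin.castLE (by omega) i)) ∂ (ρ (k + n + 1)))
      atTop (𝓝 (∏ i : Fin k, ∫ x, φ i x ∂ p))

/-- The laws of the empirical measures converge to the point mass at `p` in `P(P(S))`. -/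
def EmpLawTendsto {S : Type*} [MeasurableSpace S] [TopologicalSpace S] [OpensMeasurableSpace S]
    (ρ : ∀ n, Measure (Fin n → S)) (p : ProbabilityMeasure S) : Prop :=
  ∀ Φ : ProbabilityMeasure S →ᵇ ℝ,
    Tendsto (fun n => ∫ s, Φ (empiricalPM (n + 1) s) ∂ (ρ (n + 1))) atTop (𝓝 (Φ p))



set_option maxHeartbeats 1000000
set_option synthInstance.maxHeartbeats 400000
set_option linter.unusedSectionVars false
set_option linter.unusedVariables false

section Giry

variable {X : Type*} [MetricSpace X] [MeasurableSpace X] [BorelSpace X]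
variable {Ω : Type*} [MeasurableSpace Ω]

lemma continuous_lintegral_bcnn (f : X →ᵇ ℝ≥0) :
    Continuous fun μ : ProbabilityMeasure X => ∫⁻ x, (f x : ℝ≥0∞) ∂(μ : Measure X) := by
  rw [continuous_iff_continuousAt]
  intro μ
  exact continuousAt_of_tendsto_nhds
    (MeasureTheory.ProbabilityMeasure.tendsto_iff_forall_lintegral_tendsto.mp tendsto_id f)


/-- If all lintegrals of bounded continuous `ℝ≥0`-valued functions are measurable in `ω`,
then `ω ↦ (g ω : Measure X)` is measurable (Giry σ-algebra). -/
lemma measurable_toMeasure_of_forall_lintegral (g : Ω → ProbabilityMeasure X)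
    (hg : ∀ f : X →ᵇ ℝ≥0, Measurable fun ω => ∫⁻ x, (f x : ℝ≥0∞) ∂(g ω : Measure X)) :
    Measurable fun ω => (g ω : Measure X) := by
  apply Measure.measurable_of_measurable_coe
  have h_eq : (inferInstance : MeasurableSpace X) = MeasurableSpace.generateFrom {A | IsClosed A} := by
    rw [BorelSpace.measurable_eq (α := X), borel_eq_generateFrom_isClosed]
  have h_pi : IsPiSystem {A : Set X | IsClosed A} := by
    intro A hA B hB _
    exact hA.inter hB
  refine MeasurableSpace.induction_on_inter h_eq h_pi ?_ ?_ ?_ ?_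
  · simp only [measure_empty]; exact measurable_const
  · intro A hA
    have key : ∀ ω, Tendsto (fun m => ∫⁻ x, ((hA.apprSeq m) x : ℝ≥0∞) ∂(g ω : Measure X)) atTop
        (𝓝 ((g ω : Measure X) A)) := fun ω =>
      HasOuterApproxClosed.tendsto_lintegral_apprSeq hA (g ω : Measure X)
    exact ENNReal.measurable_of_tendsto' atTop (fun m => hg (hA.apprSeq m))
      (tendsto_pi_nhds.mpr key)
  · intro A hA hmeas
    have : ∀ ω, (g ω : Measure X) Aᶜ = 1 - (g ω : Measure X) A := by
      intro ω
      rw [measure_compl hA (measure_ne_top _ _)]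
      simp
    simp_rw [this]
    exact Measurable.const_sub hmeas 1
  · intro A hdisj hAm hmeas
    have : ∀ ω, (g ω : Measure X) (⋃ i, A i) = ∑' i, (g ω : Measure X) (A i) := fun ω =>
      measure_iUnion hdisj hAm
    simp_rw [this]
    exact Measurable.ennreal_tsum hmeas

/-- Measurability of `ω ↦ (g ω)^{⊗ N}`. -/
lemma measurable_pi_of_prob {N : ℕ} (g : Ω → ProbabilityMeasure X)
    (hg : Measurable fun ω => (g ω : Measure X)) :
    Measurable fun ω => Measure.pi fun _ : Fin N => (g ω : Measure X) := by
  apply Measure.measurable_of_measurable_coe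
  refine MeasurableSpace.induction_on_inter generateFrom_pi.symm isPiSystem_pi ?_ ?_ ?_ ?_
  · simp only [measure_empty]; exact measurable_const
  · rintro _ ⟨A, hA, rfl⟩
    simp only [Set.mem_univ, Set.mem_pi, Set.mem_setOf_eq, forall_true_left] at hA
    have : ∀ ω, Measure.pi (fun _ : Fin N => (g ω : Measure X)) (Set.pi Set.univ A)
        = ∏ i, (g ω : Measure X) (A i) := fun ω => Measure.pi_pi _ _
    simp_rw [this]
    exact Finset.measurable_prod _ fun i _ => (Measure.measurable_coe (hA i)).comp hg
  · intro A hA hmeas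
    have : ∀ ω, Measure.pi (fun _ : Fin N => (g ω : Measure X)) Aᶜ
        = 1 - Measure.pi (fun _ : Fin N => (g ω : Measure X)) A := by
      intro ω
      rw [measure_compl hA (measure_ne_top _ _)]
      simp
    simp_rw [this]
    exact Measurable.const_sub hmeas 1
  · intro A hdisj hAm hmeas
    have : ∀ ω, Measure.pi (fun _ : Fin N => (g ω : Measure X)) (⋃ i, A i)
        = ∑' i, Measure.pi (fun _ : Fin N => (g ω : Measure X)) (A i) := fun ω =>
      measure_iUnion hdisj hAm
    simp_rw [this]
    exact Measurable.ennreal_tsum hmeas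

end Giry


lemma integral_bind_of_bounded {Ω₁ Ω₂ : Type*} [MeasurableSpace Ω₁] [MeasurableSpace Ω₂]
    (μ : Measure Ω₁) [IsProbabilityMeasure μ] (κ : Ω₁ → Measure Ω₂)
    (hκ : Measurable κ) (hκp : ∀ a, IsProbabilityMeasure (κ a))
    (h : Ω₂ → ℝ) (hh : Measurable h) (C : ℝ) (hC : 0 ≤ C) (hb : ∀ x, |h x| ≤ C) :
    ∫ x, h x ∂(μ.bind κ) = ∫ a, ∫ x, h x ∂(κ a) ∂μ := by
  haveI : IsProbabilityMeasure (μ.bind κ) := by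
    constructor
    rw [Measure.bind_apply MeasurableSet.univ hκ.aemeasurable]
    simp [fun a => (hκp a).measure_univ]
  have hint : ∀ (ν : Measure Ω₂), IsProbabilityMeasure ν → Integrable h ν := by
    intro ν hν
    exact Integrable.mono' (integrable_const C) hh.aestronglyMeasurable
      (ae_of_all _ fun x => by simpa [Real.norm_eq_abs] using hb x)
  -- positive and negative parts as lintegrals
  set P : Ω₁ → ℝ≥0∞ := fun a => ∫⁻ x, ENNReal.ofReal (h x) ∂(κ a) with hP
  set N : Ω₁ → ℝ≥0∞ := fun a => ∫⁻ x, ENNReal.ofReal (-h x) ∂(κ a) with hN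
  have hPm : Measurable P := (Measure.measurable_lintegral hh.ennreal_ofReal).comp hκ
  have hNm : Measurable N := (Measure.measurable_lintegral hh.neg.ennreal_ofReal).comp hκ
  have hPb : ∀ a, P a ≤ ENNReal.ofReal C := by
    intro a
    calc P a ≤ ∫⁻ _, ENNReal.ofReal C ∂(κ a) :=
          lintegral_mono fun x => ENNReal.ofReal_le_ofReal ((le_abs_self _).trans (hb x))
      _ = ENNReal.ofReal C := by simp [(hκp a).measure_univ]
  have hNb : ∀ a, N a ≤ ENNReal.ofReal C := by
    intro a
    calc N a ≤ ∫⁻ _, ENNReal.ofReal C ∂(κ a) :=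
          lintegral_mono fun x => ENNReal.ofReal_le_ofReal ((neg_le_abs _).trans (hb x))
      _ = ENNReal.ofReal C := by simp [(hκp a).measure_univ]
  have keyint : ∀ (g : Ω₁ → ℝ≥0∞), Measurable g → (∀ a, g a ≤ ENNReal.ofReal C) →
      Integrable (fun a => (g a).toReal) μ ∧
        ∫ a, (g a).toReal ∂μ = (∫⁻ a, g a ∂μ).toReal := by
    intro g hg hgb
    constructor
    · refine Integrable.mono' (integrable_const C) (hg.ennreal_toReal).aestronglyMeasurable
        (ae_of_all _ fun a => ?_)
      rw [Real.norm_eq_abs, abs_of_nonneg ENNReal.toReal_nonneg]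
      exact ENNReal.toReal_le_of_le_ofReal hC (hgb a)
    · exact integral_toReal hg.aemeasurable
        (ae_of_all _ fun a => (hgb a).trans_lt ENNReal.ofReal_lt_top)
  rw [integral_eq_lintegral_pos_part_sub_lintegral_neg_part (hint _ inferInstance)]
  have hinner : ∀ a, ∫ x, h x ∂(κ a) = (P a).toReal - (N a).toReal := fun a =>
    integral_eq_lintegral_pos_part_sub_lintegral_neg_part (hint _ (hκp a))
  calc (∫⁻ x, ENNReal.ofReal (h x) ∂(μ.bind κ)).toReal
        - (∫⁻ x, ENNReal.ofReal (-h x) ∂(μ.bind κ)).toReal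
      = (∫⁻ a, P a ∂μ).toReal - (∫⁻ a, N a ∂μ).toReal := by
        rw [Measure.lintegral_bind hκ.aemeasurable hh.ennreal_ofReal.aemeasurable, Measure.lintegral_bind (f := fun x => ENNReal.ofReal (-h x)) hκ.aemeasurable hh.neg.ennreal_ofReal.aemeasurable]
    _ = ∫ a, (P a).toReal ∂μ - ∫ a, (N a).toReal ∂μ := by
        rw [(keyint P hPm hPb).2, (keyint N hNm hNb).2]
    _ = ∫ a, ((P a).toReal - (N a).toReal) ∂μ :=
        (integral_sub (keyint P hPm hPb).1 (keyint N hNm hNb).1).symm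
    _ = ∫ a, ∫ x, h x ∂(κ a) ∂μ := by simp_rw [hinner]


lemma prod_castLE_eq {M : Type*} [CommMonoid M] {k N : ℕ} (h : k ≤ N)
    (G : Fin N → M) (hG : ∀ j : Fin N, ¬ ((j : ℕ) < k) → G j = 1) (ψ : Fin k → M)
    (hψ : ∀ i : Fin k, G (Fin.castLE h i) = ψ i) :
    ∏ j : Fin N, G j = ∏ i : Fin k, ψ i := by
  have hs : (Finset.univ.map (Fin.castLEEmb h)) ⊆ Finset.univ := Finset.subset_univ _
  rw [← Finset.prod_subset hs ?h1]
  · rw [Finset.prod_map]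
    exact Finset.prod_congr rfl fun i _ => hψ i
  · intro j _ hj
    apply hG
    intro hjk
    exact hj (Finset.mem_map.mpr ⟨⟨(j : ℕ), hjk⟩, Finset.mem_univ _, by
      simp [Fin.castLEEmb, Fin.castLE]⟩)

/-- Integral of a product of functions of the first `k` coordinates against `ν^{⊗N}`. -/
lemma integral_pi_prod_castLE {X : Type*} [TopologicalSpace X] [MeasurableSpace X] (ν : Measure X)
    [IsProbabilityMeasure ν] {k N : ℕ} (h : k ≤ N) (φ : Fin k → (X →ᵇ ℝ)) :
    ∫ t : Fin N → X, ∏ i : Fin k, φ i (t (Fin.castLE h i)) ∂(Measure.pi fun _ => ν)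
      = ∏ i : Fin k, ∫ x, φ i x ∂ν := by
  classical
  letI : MeasureSpace X := ⟨ν⟩
  have hvol : (Measure.pi fun _ : Fin N => ν) = (volume : Measure (Fin N → X)) :=
    (MeasureTheory.volume_pi).symm
  set G : Fin N → X → ℝ := fun j x => if h' : (j : ℕ) < k then φ ⟨j, h'⟩ x else 1 with hGdef
  have hpt : ∀ t : Fin N → X, ∏ i : Fin k, φ i (t (Fin.castLE h i)) = ∏ j, G j (t j) := by
    intro t
    refine (prod_castLE_eq h (fun j => G j (t j)) ?_ _ ?_).symm
    · intro j hj
      simp only [hGdef, dif_neg hj]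
    · intro i
      simp only [hGdef]
      rw [dif_pos (show ((Fin.castLE h i : Fin N) : ℕ) < k from i.isLt)]
      congr 1
  have hint : ∀ j, ∫ x, G j x ∂ν = if h' : (j : ℕ) < k then ∫ x, φ ⟨j, h'⟩ x ∂ν else 1 := by
    intro j
    by_cases h' : (j : ℕ) < k
    · have e : (fun x => G j x) = fun x => φ ⟨j, h'⟩ x := funext fun x => dif_pos h'
      rw [show (∫ x, G j x ∂ν) = ∫ x, φ ⟨j, h'⟩ x ∂ν from by rw [e], dif_pos h']
    · have e : (fun x => G j x) = fun _ => (1 : ℝ) := funext fun x => dif_neg h'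
      rw [show (∫ x, G j x ∂ν) = ∫ _, (1 : ℝ) ∂ν from by rw [e], dif_neg h']
      simp
  simp_rw [hpt, hvol]
  rw [MeasureTheory.integral_fintype_prod_volume_eq_prod (𝕜 := ℝ) (ι := Fin N) (fun j x => G j x)]
  refine prod_castLE_eq h (fun j => ∫ x, G j x) ?_ _ ?_
  · intro j hj
    show (∫ x, G j x ∂ν) = 1
    rw [hint j, dif_neg hj]
  · intro i
    show (∫ x, G (Fin.castLE h i) x ∂ν) = ∫ x, φ i x ∂ν
    rw [hint, dif_pos (show ((Fin.castLE h i : Fin N) : ℕ) < k from i.isLt)]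
    congr 1


section Aux

set_option linter.unusedSectionVars false

variable {S : Type*} [MetricSpace S] [TopologicalSpace.SeparableSpace S]
  [MeasurableSpace S] [BorelSpace S]

lemma integral_empiricalPM {n : ℕ} [NeZero n] (s : Fin n → S) (f : S →ᵇ ℝ) :
    ∫ x, f x ∂(empiricalPM n s : Measure S) = (n : ℝ)⁻¹ * ∑ i, f (s i) := by
  have : (empiricalPM n s : Measure S) = ((n : ℝ≥0∞))⁻¹ • ∑ i, Measure.dirac (s i) := by
    simp [empiricalPM, empiricalMeasure, avgDirac]
  rw [this, integral_smul_measure, integral_finset_sum_measure (fun i _ => f.integrable _)]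
  simp [integral_dirac, smul_eq_mul]

variable (ρ : ∀ n, Measure (Fin n → S)) (p : ProbabilityMeasure S)

lemma secondMoment (hprob : ∀ n, IsProbabilityMeasure (ρ n))
    (hsym : ∀ n, IsSymmetricLaw (ρ n)) (hchaos : IsChaotic ρ (p : Measure S))
    (f g : S →ᵇ ℝ) :
    Tendsto (fun n => ∫ s, (∫ x, f x ∂(empiricalPM (n + 1) s : Measure S))
        * (∫ x, g x ∂(empiricalPM (n + 1) s : Measure S)) ∂(ρ (n + 1)))
      atTop
      (𝓝 ((∫ x, f x ∂(p : Measure S)) * ∫ x, g x ∂(p : Measure S))) := by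
  classical
  haveI : SecondCountableTopology S := UniformSpace.secondCountable_of_separable S
  set B : ℝ := ‖f‖ * ‖g‖ with hBdef
  have hB : 0 ≤ B := mul_nonneg (norm_nonneg _) (norm_nonneg _)
  -- integrability and bounds for the pair integrands
  have hcont : ∀ (N : ℕ) (i j : Fin N), Continuous fun s : Fin N → S => f (s i) * g (s j) :=
    fun N i j => ((f.continuous.comp (continuous_apply i)).mul
      (g.continuous.comp (continuous_apply j)))
  have hptbd : ∀ (N : ℕ) (i j : Fin N) (s : Fin N → S), ‖f (s i) * g (s j)‖ ≤ B := by
    intro N i j s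
    rw [norm_mul]
    exact mul_le_mul (f.norm_coe_le_norm _) (g.norm_coe_le_norm _) (norm_nonneg _)
      (norm_nonneg _)
  have hI : ∀ (N : ℕ) (i j : Fin N), Integrable (fun s => f (s i) * g (s j)) (ρ N) := by
    intro N i j
    haveI := hprob N
    exact Integrable.mono' (integrable_const B) (hcont N i j).aestronglyMeasurable
      (ae_of_all _ (hptbd N i j))
  have hbd : ∀ (N : ℕ) (i j : Fin N), |∫ s, f (s i) * g (s j) ∂ρ N| ≤ B := by
    intro N i j
    haveI := hprob N
    have := norm_integral_le_of_norm_le_const (μ := ρ N)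
      (f := fun s => f (s i) * g (s j)) (C := B) (ae_of_all _ (hptbd N i j))
    simpa [measure_univ] using this
  -- exchangeability: off-diagonal terms all agree
  have hpair : ∀ (N : ℕ) (h2 : 2 ≤ N) (i j : Fin N), i ≠ j →
      ∫ s, f (s i) * g (s j) ∂ρ N
        = ∫ s, f (s ⟨0, by omega⟩) * g (s ⟨1, by omega⟩) ∂ρ N := by
    intro N h2 i j hij
    set a : Fin N := ⟨0, by omega⟩
    set b : Fin N := ⟨1, by omega⟩
    have hab : a ≠ b := by simp [a, b, Fin.ext_iff]
    have hac : a ≠ Equiv.swap a i j := by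
      intro hc
      exact hij (by simpa [Equiv.swap_apply_left, Equiv.swap_apply_self]
        using congrArg (Equiv.swap a i) hc)
    set σ : Equiv.Perm (Fin N) := (Equiv.swap b (Equiv.swap a i j)).trans (Equiv.swap a i)
      with hσdef
    have hσa : σ a = i := by
      simp only [hσdef, Equiv.trans_apply]
      rw [Equiv.swap_apply_of_ne_of_ne hab hac, Equiv.swap_apply_left]
    have hσb : σ b = j := by
      simp only [hσdef, Equiv.trans_apply]
      rw [Equiv.swap_apply_left, Equiv.swap_apply_self]
    have hmeas : Measurable fun s : Fin N → S => s ∘ σ :=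
      measurable_pi_lambda _ fun i => measurable_pi_apply _
    conv_rhs => rw [← hsym N σ]
    rw [integral_map hmeas.aemeasurable]
    · simp only [Function.comp_apply]
      rw [← hσa, ← hσb]
    · rw [hsym N σ]
      exact (hcont N a b).aestronglyMeasurable
  -- the pivot sequence from the chaos hypothesis
  set c : ℕ → ℝ := fun N =>
    if h2 : 2 ≤ N then ∫ s, f (s ⟨0, by omega⟩) * g (s ⟨1, by omega⟩) ∂ρ N else 0 with hcdef
  have hcval : ∀ (N : ℕ) (h2 : 2 ≤ N),
      c N = ∫ s, f (s ⟨0, by omega⟩) * g (s ⟨1, by omega⟩) ∂ρ N := by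
    intro N h2
    simp only [hcdef, dif_pos h2]
  have hcbd : ∀ N, |c N| ≤ B := by
    intro N
    by_cases h2 : 2 ≤ N
    · rw [hcval N h2]; exact hbd N _ _
    · simp only [hcdef, dif_neg h2, abs_zero]; exact hB
  have hc : Tendsto c atTop (𝓝 ((∫ x, f x ∂(p : Measure S)) * ∫ x, g x ∂(p : Measure S))) := by
    have h2 := hchaos 2 ![f, g]
    have hlim : (∏ i : Fin 2, ∫ x, (![f, g] i) x ∂(p : Measure S))
        = (∫ x, f x ∂(p : Measure S)) * ∫ x, g x ∂(p : Measure S) := by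
      rw [Fin.prod_univ_two]
      rfl
    rw [hlim] at h2
    have heq : ∀ n, (∫ s, ∏ i : Fin 2,
          (![f, g] i) (s (Fin.castLE (by omega) i)) ∂ρ (2 + n + 1)) = c (2 + n + 1) := by
      intro n
      rw [hcval _ (by omega)]
      have hpt : ∀ s : Fin (2 + n + 1) → S,
          (∏ i : Fin 2, (![f, g] i) (s (Fin.castLE (by omega : (2:ℕ) ≤ 2 + n + 1) i)))
            = f (s ⟨0, by omega⟩) * g (s ⟨1, by omega⟩) := by
        intro s
        rw [Fin.prod_univ_two]
        rfl
      simp only [hpt]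
    have h3 : Tendsto (fun n => c (2 + n + 1)) atTop
        (𝓝 ((∫ x, f x ∂(p : Measure S)) * ∫ x, g x ∂(p : Measure S))) := h2.congr heq
    have h4 : (fun n => c (2 + n + 1)) = fun n => c (n + 3) :=
      funext fun n => congrArg c (by omega)
    rw [h4] at h3
    exact (tendsto_add_atTop_iff_nat 3).mp h3
  -- expansion of the empirical double integral
  have hE : ∀ n : ℕ,
      (∫ s, (∫ x, f x ∂(empiricalPM (n + 1) s : Measure S))
          * (∫ x, g x ∂(empiricalPM (n + 1) s : Measure S)) ∂(ρ (n + 1)))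
        = (((n + 1 : ℕ) : ℝ)⁻¹ * ((n + 1 : ℕ) : ℝ)⁻¹)
            * ∑ i : Fin (n + 1), ∑ j : Fin (n + 1), ∫ s, f (s i) * g (s j) ∂ρ (n + 1) := by
    intro n
    haveI := hprob (n + 1)
    have hpt : ∀ s : Fin (n + 1) → S,
        (∫ x, f x ∂(empiricalPM (n + 1) s : Measure S))
            * (∫ x, g x ∂(empiricalPM (n + 1) s : Measure S))
          = (((n + 1 : ℕ) : ℝ)⁻¹ * ((n + 1 : ℕ) : ℝ)⁻¹)
              * ∑ i : Fin (n + 1), ∑ j : Fin (n + 1), f (s i) * g (s j) := by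
      intro s
      rw [integral_empiricalPM, integral_empiricalPM, mul_mul_mul_comm, Finset.sum_mul_sum]
    simp only [hpt]
    rw [integral_const_mul, integral_finset_sum _ (fun i _ =>
      integrable_finset_sum _ (fun j _ => hI (n + 1) i j))]
    congr 1
    exact Finset.sum_congr rfl fun i _ =>
      integral_finset_sum _ fun j _ => hI (n + 1) i j
  -- the deviation bound
  have hdiff : ∀ n : ℕ, 1 ≤ n →
      |(∫ s, (∫ x, f x ∂(empiricalPM (n + 1) s : Measure S))
          * (∫ x, g x ∂(empiricalPM (n + 1) s : Measure S)) ∂(ρ (n + 1))) - c (n + 1)|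
        ≤ 2 * B / ((n + 1 : ℕ) : ℝ) := by
    intro n hn
    have h2 : 2 ≤ n + 1 := by omega
    set N : ℕ := n + 1
    have hNR : ((N : ℕ) : ℝ) ≠ 0 := by positivity
    rw [hE n]
    have hterm : ∀ i j : Fin N,
        |(∫ s, f (s i) * g (s j) ∂ρ N) - c N| ≤ if i = j then 2 * B else 0 := by
      intro i j
      by_cases hij : i = j
      · rw [if_pos hij]
        calc |(∫ s, f (s i) * g (s j) ∂ρ N) - c N|
            ≤ |∫ s, f (s i) * g (s j) ∂ρ N| + |c N| := abs_sub _ _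
          _ ≤ B + B := add_le_add (hbd N i j) (hcbd N)
          _ = 2 * B := by ring
      · rw [if_neg hij, hpair N h2 i j hij, ← hcval N h2, sub_self, abs_zero]
    have hsum : |∑ i : Fin N, ∑ j : Fin N, ((∫ s, f (s i) * g (s j) ∂ρ N) - c N)|
        ≤ (N : ℝ) * (2 * B) := by
      calc |∑ i : Fin N, ∑ j : Fin N, ((∫ s, f (s i) * g (s j) ∂ρ N) - c N)|
          ≤ ∑ i : Fin N, ∑ j : Fin N, |(∫ s, f (s i) * g (s j) ∂ρ N) - c N| := by
            refine (Finset.abs_sum_le_sum_abs _ _).trans ?_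
            exact Finset.sum_le_sum fun i _ => Finset.abs_sum_le_sum_abs _ _
        _ ≤ ∑ i : Fin N, ∑ j : Fin N, (if i = j then 2 * B else 0) :=
            Finset.sum_le_sum fun i _ => Finset.sum_le_sum fun j _ => hterm i j
        _ = (N : ℝ) * (2 * B) := by
            simp [Finset.sum_ite_eq, Finset.card_univ]
    have hiden :
        (((N : ℕ) : ℝ)⁻¹ * ((N : ℕ) : ℝ)⁻¹)
              * (∑ i : Fin N, ∑ j : Fin N, ∫ s, f (s i) * g (s j) ∂ρ N) - c N
          = (((N : ℕ) : ℝ)⁻¹ * ((N : ℕ) : ℝ)⁻¹)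
              * ∑ i : Fin N, ∑ j : Fin N, ((∫ s, f (s i) * g (s j) ∂ρ N) - c N) := by
      simp only [Finset.sum_sub_distrib, Finset.sum_const, Finset.card_univ,
        Fintype.card_fin, nsmul_eq_mul, mul_sub]
      congr 1
      field_simp
    rw [hiden]
    calc |(((N : ℕ) : ℝ)⁻¹ * ((N : ℕ) : ℝ)⁻¹)
            * ∑ i : Fin N, ∑ j : Fin N, ((∫ s, f (s i) * g (s j) ∂ρ N) - c N)|
        = (((N : ℕ) : ℝ)⁻¹ * ((N : ℕ) : ℝ)⁻¹)
            * |∑ i : Fin N, ∑ j : Fin N, ((∫ s, f (s i) * g (s j) ∂ρ N) - c N)| := by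
          rw [abs_mul, abs_of_nonneg (by positivity)]
      _ ≤ (((N : ℕ) : ℝ)⁻¹ * ((N : ℕ) : ℝ)⁻¹) * ((N : ℝ) * (2 * B)) := by
          exact mul_le_mul_of_nonneg_left hsum (by positivity)
      _ = 2 * B / ((N : ℕ) : ℝ) := by
          field_simp
  -- conclusion by comparison with the pivot sequence
  have hc1 : Tendsto (fun n => c (n + 1)) atTop
      (𝓝 ((∫ x, f x ∂(p : Measure S)) * ∫ x, g x ∂(p : Measure S))) :=
    hc.comp (tendsto_add_atTop_nat 1)
  refine hc1.congr_dist ?_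
  have hlim0 : Tendsto (fun n : ℕ => 2 * B / ((n + 1 : ℕ) : ℝ)) atTop (𝓝 0) := by
    have := (tendsto_const_div_atTop_nhds_zero_nat (2 * B)).comp (tendsto_add_atTop_nat 1)
    exact this
  refine squeeze_zero' (Eventually.of_forall fun n => dist_nonneg) ?_ hlim0
  filter_upwards [eventually_ge_atTop 1] with n hn
  rw [dist_comm, Real.dist_eq]
  exact hdiff n hn


lemma continuous_empiricalPM {n : ℕ} [NeZero n] :
    Continuous fun s : Fin n → S => empiricalPM n s := by
  rw [continuous_iff_continuousAt]
  intro s₀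
  apply MeasureTheory.ProbabilityMeasure.tendsto_iff_forall_integral_tendsto.mpr
  intro f
  simp only [integral_empiricalPM]
  exact Tendsto.const_mul _ <| tendsto_finset_sum _ fun i _ =>
    (f.continuous.comp (continuous_apply i)).continuousAt

lemma probBound (hprob : ∀ n, IsProbabilityMeasure (ρ n))
    (hsym : ∀ n, IsSymmetricLaw (ρ n)) (hchaos : IsChaotic ρ (p : Measure S))
    (f : S →ᵇ ℝ) {δ : ℝ} (hδ : 0 < δ) :
    Tendsto (fun n => ((ρ (n + 1)) {s | δ ≤
        |(∫ x, f x ∂(empiricalPM (n + 1) s : Measure S)) - ∫ x, f x ∂(p : Measure S)|}).toReal)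
      atTop (𝓝 0) := by
  classical
  haveI : SecondCountableTopology S := UniformSpace.secondCountable_of_separable S
  set c : ℝ := ∫ x, f x ∂(p : Measure S) with hcdef
  set X : ∀ n : ℕ, (Fin (n + 1) → S) → ℝ :=
    fun n s => ∫ x, f x ∂(empiricalPM (n + 1) s : Measure S) with hXdef
  have hXcont : ∀ n, Continuous (X n) := by
    intro n
    have : X n = fun s => ((n + 1 : ℕ) : ℝ)⁻¹ * ∑ i, f (s i) :=
      funext fun s => integral_empiricalPM s f
    rw [this]
    exact continuous_const.mul (continuous_finset_sum _ fun i _ =>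
      f.continuous.comp (continuous_apply i))
  have hXbd : ∀ n s, |X n s| ≤ ‖f‖ := by
    intro n s
    have := norm_integral_le_of_norm_le_const (μ := (empiricalPM (n + 1) s : Measure S))
      (f := fun x => f x) (C := ‖f‖) (ae_of_all _ fun x => f.norm_coe_le_norm x)
    simpa [measure_univ] using this
  have hIX : ∀ n, Integrable (X n) (ρ (n + 1)) := by
    intro n
    haveI := hprob (n + 1)
    exact Integrable.mono' (integrable_const ‖f‖) (hXcont n).aestronglyMeasurable
      (ae_of_all _ fun s => by simpa [Real.norm_eq_abs] using hXbd n s)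
  have hIXX : ∀ n, Integrable (fun s => X n s * X n s) (ρ (n + 1)) := by
    intro n
    haveI := hprob (n + 1)
    refine Integrable.mono' (integrable_const (‖f‖ * ‖f‖))
      ((hXcont n).mul (hXcont n)).aestronglyMeasurable (ae_of_all _ fun s => ?_)
    rw [Real.norm_eq_abs, abs_mul]
    exact mul_le_mul (hXbd n s) (hXbd n s) (abs_nonneg _) (norm_nonneg _)
  have hIsq : ∀ n, Integrable (fun s => (X n s - c) ^ 2) (ρ (n + 1)) := by
    intro n
    haveI := hprob (n + 1)
    refine Integrable.mono' (integrable_const ((‖f‖ + |c|) ^ 2))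
      (((hXcont n).sub continuous_const).pow 2).aestronglyMeasurable (ae_of_all _ fun s => ?_)
    rw [Real.norm_eq_abs, abs_pow]
    refine pow_le_pow_left₀ (abs_nonneg _) ?_ 2
    calc |X n s - c| ≤ |X n s| + |c| := abs_sub _ _
      _ ≤ ‖f‖ + |c| := add_le_add (hXbd n s) le_rfl
  -- the variance tends to zero
  set V : ℕ → ℝ := fun n => ∫ s, (X n s - c) ^ 2 ∂ρ (n + 1) with hVdef
  have hV : ∀ n, V n = (∫ s, X n s * X n s ∂ρ (n + 1))
      - 2 * c * (∫ s, X n s ∂ρ (n + 1)) + c * c := by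
    intro n
    haveI := hprob (n + 1)
    have hpt : ∀ s, (X n s - c) ^ 2 = (X n s * X n s - 2 * c * X n s) + c * c :=
      fun s => by ring
    simp only [hVdef, hpt]
    have hmulI : Integrable (fun s => 2 * c * X n s) (ρ (n + 1)) := (hIX n).const_mul (2 * c)
    have hsubI : Integrable (fun s => X n s * X n s - 2 * c * X n s) (ρ (n + 1)) :=
      (hIXX n).sub hmulI
    rw [integral_add hsubI (integrable_const _), integral_sub (hIXX n) hmulI, integral_const_mul]
    simp [measure_univ]
  have hXX := secondMoment ρ p hprob hsym hchaos f f
  have hX1 := secondMoment ρ p hprob hsym hchaos f 1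
  have hone : ∀ (n : ℕ) (s : Fin (n + 1) → S),
      (∫ x, (1 : S →ᵇ ℝ) x ∂(empiricalPM (n + 1) s : Measure S)) = 1 := by
    intro n s
    simp [BoundedContinuousFunction.coe_one, measure_univ]
  have honep : (∫ x, (1 : S →ᵇ ℝ) x ∂(p : Measure S)) = 1 := by
    simp [BoundedContinuousFunction.coe_one, measure_univ]
  simp only [hone, honep, mul_one] at hX1
  have hV0 : Tendsto V atTop (𝓝 0) := by
    have h := (hXX.sub (hX1.const_mul (2 * c))).add
      (tendsto_const_nhds (x := c * c) (f := atTop))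
    have : (fun n => (∫ s, X n s * X n s ∂ρ (n + 1))
        - 2 * c * (∫ s, X n s ∂ρ (n + 1)) + c * c) = V := funext fun n => (hV n).symm
    rw [this] at h
    convert h using 2
    rw [← hcdef]
    ring
  -- Chebyshev
  refine squeeze_zero (fun n => ENNReal.toReal_nonneg) (g := fun n => V n / δ ^ 2) ?_ ?_
  · intro n
    haveI := hprob (n + 1)
    have hAm : MeasurableSet {s : Fin (n + 1) → S | δ ≤ |X n s - c|} :=
      (isClosed_Ici.preimage ((hXcont n).sub continuous_const).abs).measurableSet
    have hcheb : δ ^ 2 * ((ρ (n + 1)) {s | δ ≤ |X n s - c|}).toReal ≤ V n := by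
      have h1 : δ ^ 2 * ((ρ (n + 1)) {s | δ ≤ |X n s - c|}).toReal
          = ∫ _ in {s | δ ≤ |X n s - c|}, δ ^ 2 ∂ρ (n + 1) := by
        rw [setIntegral_const, smul_eq_mul, mul_comm]; rfl
      rw [h1]
      calc ∫ _ in {s | δ ≤ |X n s - c|}, δ ^ 2 ∂ρ (n + 1)
          ≤ ∫ s in {s | δ ≤ |X n s - c|}, (X n s - c) ^ 2 ∂ρ (n + 1) := by
            refine setIntegral_mono_on (integrable_const _).integrableOn
              (hIsq n).integrableOn hAm fun s hs => ?_
            calc δ ^ 2 ≤ |X n s - c| ^ 2 := pow_le_pow_left₀ hδ.le hs 2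
              _ = (X n s - c) ^ 2 := sq_abs _
        _ ≤ V n := setIntegral_le_integral (hIsq n) (ae_of_all _ fun s => sq_nonneg _)
    have hδ2 : (0 : ℝ) < δ ^ 2 := by positivity
    rw [← le_div_iff₀' hδ2] at hcheb
    exact hcheb
  · have := hV0.div_const (δ ^ 2)
    simpa using this

lemma nbhdBound (hprob : ∀ n, IsProbabilityMeasure (ρ n))
    (hsym : ∀ n, IsSymmetricLaw (ρ n)) (hchaos : IsChaotic ρ (p : Measure S))
    {U : Set (ProbabilityMeasure S)} (hU : U ∈ 𝓝 p) :
    Tendsto (fun n => ((ρ (n + 1)) {s | empiricalPM (n + 1) s ∉ U}).toReal) atTop (𝓝 0) := by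
  classical
  have hnhds : 𝓝 p = ⨅ (f : S →ᵇ ℝ),
      Filter.comap (fun μ : ProbabilityMeasure S => ∫ x, f x ∂(μ : Measure S))
        (𝓝 (∫ x, f x ∂(p : Measure S))) := by
    apply le_antisymm
    · exact le_iInf fun f =>
        ((MeasureTheory.ProbabilityMeasure.continuous_integral_boundedContinuousFunction
          f).tendsto p).le_comap
    · refine tendsto_id'.mp ?_
      exact MeasureTheory.ProbabilityMeasure.tendsto_iff_forall_integral_tendsto.mpr
        fun f => tendsto_iff_comap.mpr (iInf_le _ f)
  rw [hnhds] at hU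
  rcases Filter.mem_iInf.mp hU with ⟨I, hIfin, V, hV, rfl⟩
  choose W hW hWV using fun i : I => Filter.mem_comap.mp (hV i)
  choose δ hδpos hball using fun i : I => Metric.mem_nhds_iff.mp (hW i)
  haveI := hIfin.fintype
  set bad : I → ∀ n : ℕ, Set (Fin (n + 1) → S) := fun i n =>
    {s | δ i ≤ |(∫ x, (i : S →ᵇ ℝ) x ∂(empiricalPM (n + 1) s : Measure S))
      - ∫ x, (i : S →ᵇ ℝ) x ∂(p : Measure S)|} with hbaddef
  have hsub : ∀ n, {s : Fin (n + 1) → S | empiricalPM (n + 1) s ∉ ⋂ i, V i}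
      ⊆ ⋃ i : I, bad i n := by
    intro n s hs
    by_contra hcon
    simp only [Set.mem_iUnion, not_exists] at hcon
    apply hs
    refine Set.mem_iInter.mpr fun i => ?_
    refine hWV i (Set.mem_preimage.mpr (hball i ?_))
    rw [Metric.mem_ball, Real.dist_eq]
    exact not_le.mp fun h => hcon i h
  refine squeeze_zero (fun n => ENNReal.toReal_nonneg)
    (g := fun n => ∑ i : I, ((ρ (n + 1)) (bad i n)).toReal) ?_ ?_
  · intro n
    haveI := hprob (n + 1)
    have h1 : (ρ (n + 1)) {s : Fin (n + 1) → S | empiricalPM (n + 1) s ∉ ⋂ i, V i}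
        ≤ ∑ i : I, (ρ (n + 1)) (bad i n) := by
      refine (measure_mono (hsub n)).trans ?_
      refine (measure_iUnion_le _).trans ?_
      rw [tsum_fintype]
    calc ((ρ (n + 1)) {s : Fin (n + 1) → S | empiricalPM (n + 1) s ∉ ⋂ i, V i}).toReal
        ≤ (∑ i : I, (ρ (n + 1)) (bad i n)).toReal :=
          ENNReal.toReal_mono (by
            exact (ENNReal.sum_lt_top.mpr fun i _ => measure_lt_top _ _).ne) h1
      _ = ∑ i : I, ((ρ (n + 1)) (bad i n)).toReal :=
          ENNReal.toReal_sum fun i _ => measure_ne_top _ _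
  · have := tendsto_finset_sum (Finset.univ : Finset I)
      (fun i _ => probBound ρ p hprob hsym hchaos (i : S →ᵇ ℝ) (hδpos i))
    simpa using this

lemma integral_comp_empirical_tendsto (hprob : ∀ n, IsProbabilityMeasure (ρ n))
    (hsym : ∀ n, IsSymmetricLaw (ρ n)) (hchaos : IsChaotic ρ (p : Measure S))
    (Ψ : ProbabilityMeasure S → ℝ) (hΨc : Continuous Ψ) (C : ℝ) (hC : ∀ μ, |Ψ μ| ≤ C) :
    Tendsto (fun n => ∫ s, Ψ (empiricalPM (n + 1) s) ∂ρ (n + 1)) atTop (𝓝 (Ψ p)) := by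
  classical
  haveI : SecondCountableTopology S := UniformSpace.secondCountable_of_separable S
  have hC0 : 0 ≤ C := (abs_nonneg _).trans (hC p)
  rw [Metric.tendsto_atTop]
  intro ε hε
  set U : Set (ProbabilityMeasure S) := Ψ ⁻¹' Metric.ball (Ψ p) (ε / 2) with hUdef
  have hUopen : IsOpen U := Metric.isOpen_ball.preimage hΨc
  have hUmem : U ∈ 𝓝 p := hUopen.mem_nhds (by
    simp only [hUdef, Set.mem_preimage, Metric.mem_ball, dist_self]
    positivity)
  have hm := nbhdBound ρ p hprob hsym hchaos hUmem
  have hev := hm.eventually_lt_const (show (0:ℝ) < ε / (2 * (2 * C + 1)) by positivity)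
  rw [Filter.eventually_atTop] at hev
  rcases hev with ⟨M, hM⟩
  refine ⟨M, fun n hn => ?_⟩
  haveI := hprob (n + 1)
  haveI : IsFiniteMeasure (ρ (n + 1)) := inferInstance
  have hcontE : Continuous fun s : Fin (n + 1) → S => Ψ (empiricalPM (n + 1) s) :=
    hΨc.comp continuous_empiricalPM
  have hIe : Integrable (fun s => Ψ (empiricalPM (n + 1) s)) (ρ (n + 1)) :=
    Integrable.mono' (integrable_const C) hcontE.aestronglyMeasurable
      (ae_of_all _ fun s => by simpa [Real.norm_eq_abs] using hC _)
  set A : Set (Fin (n + 1) → S) := (fun s : Fin (n + 1) → S => empiricalPM (n + 1) s) ⁻¹' U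
    with hAdef
  have hAmeas : MeasurableSet A := (hUopen.preimage continuous_empiricalPM).measurableSet
  have htR : ∀ B : Set (Fin (n + 1) → S), ((ρ (n + 1)) B).toReal ≤ 1 := by
    intro B
    have h := ENNReal.toReal_mono (measure_ne_top (ρ (n + 1)) Set.univ)
      (measure_mono (Set.subset_univ B))
    simpa [measure_univ] using h
  have hd : Integrable (fun s => |Ψ (empiricalPM (n + 1) s) - Ψ p|) (ρ (n + 1)) :=
    (hIe.sub (integrable_const _)).abs
  have key : |(∫ s, Ψ (empiricalPM (n + 1) s) ∂ρ (n + 1)) - Ψ p|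
      ≤ ε / 2 + (2 * C) * ((ρ (n + 1)) Aᶜ).toReal := by
    have h1 : (∫ s, Ψ (empiricalPM (n + 1) s) ∂ρ (n + 1)) - Ψ p
        = ∫ s, (Ψ (empiricalPM (n + 1) s) - Ψ p) ∂ρ (n + 1) := by
      rw [integral_sub hIe (integrable_const _), integral_const]
      simp [measure_univ]
    rw [h1]
    calc |∫ s, (Ψ (empiricalPM (n + 1) s) - Ψ p) ∂ρ (n + 1)|
        ≤ ∫ s, |Ψ (empiricalPM (n + 1) s) - Ψ p| ∂ρ (n + 1) := by
          simpa [Real.norm_eq_abs] using norm_integral_le_integral_norm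
            (fun s => Ψ (empiricalPM (n + 1) s) - Ψ p) (μ := ρ (n + 1))
      _ = (∫ s in A, |Ψ (empiricalPM (n + 1) s) - Ψ p| ∂ρ (n + 1))
            + ∫ s in Aᶜ, |Ψ (empiricalPM (n + 1) s) - Ψ p| ∂ρ (n + 1) :=
          (integral_add_compl hAmeas hd).symm
      _ ≤ (ε / 2) * ((ρ (n + 1)) A).toReal + (2 * C) * ((ρ (n + 1)) Aᶜ).toReal := by
          refine add_le_add ?_ ?_
          · calc (∫ s in A, |Ψ (empiricalPM (n + 1) s) - Ψ p| ∂ρ (n + 1))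
                ≤ ∫ _ in A, (ε / 2) ∂ρ (n + 1) := by
                  refine setIntegral_mono_on hd.integrableOn
                    (integrable_const _).integrableOn hAmeas fun s hs => ?_
                  have : dist (Ψ (empiricalPM (n + 1) s)) (Ψ p) < ε / 2 := hs
                  rw [Real.dist_eq] at this
                  exact this.le
              _ = (ε / 2) * ((ρ (n + 1)) A).toReal := by
                  rw [setIntegral_const, smul_eq_mul, mul_comm]; rfl
          · calc (∫ s in Aᶜ, |Ψ (empiricalPM (n + 1) s) - Ψ p| ∂ρ (n + 1))
                ≤ ∫ _ in Aᶜ, (2 * C) ∂ρ (n + 1) := by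
                  refine setIntegral_mono_on hd.integrableOn
                    (integrable_const _).integrableOn hAmeas.compl fun s _ => ?_
                  calc |Ψ (empiricalPM (n + 1) s) - Ψ p|
                      ≤ |Ψ (empiricalPM (n + 1) s)| + |Ψ p| := abs_sub _ _
                    _ ≤ C + C := add_le_add (hC _) (hC _)
                    _ = 2 * C := by ring
              _ = (2 * C) * ((ρ (n + 1)) Aᶜ).toReal := by
                  rw [setIntegral_const, smul_eq_mul, mul_comm]; rfl
      _ ≤ ε / 2 + (2 * C) * ((ρ (n + 1)) Aᶜ).toReal := by
          refine add_le_add ?_ le_rfl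
          calc (ε / 2) * ((ρ (n + 1)) A).toReal ≤ (ε / 2) * 1 :=
              mul_le_mul_of_nonneg_left (htR A) (by positivity)
            _ = ε / 2 := mul_one _
  have hAc : ((ρ (n + 1)) Aᶜ).toReal < ε / (2 * (2 * C + 1)) := by
    have : Aᶜ = {s : Fin (n + 1) → S | empiricalPM (n + 1) s ∉ U} := rfl
    rw [this]
    exact hM n hn
  rw [Real.dist_eq]
  have h2 : (2 * C) * ((ρ (n + 1)) Aᶜ).toReal ≤ (2 * C + 1) * ((ρ (n + 1)) Aᶜ).toReal :=
    mul_le_mul_of_nonneg_right (by linarith) ENNReal.toReal_nonneg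
  have h3 : (2 * C + 1) * ((ρ (n + 1)) Aᶜ).toReal < (2 * C + 1) * (ε / (2 * (2 * C + 1))) :=
    mul_lt_mul_of_pos_left hAc (by positivity)
  have h4 : (2 * C + 1) * (ε / (2 * (2 * C + 1))) = ε / 2 := by
    field_simp
  calc |(∫ s, Ψ (empiricalPM (n + 1) s) ∂ρ (n + 1)) - Ψ p|
      ≤ ε / 2 + (2 * C) * ((ρ (n + 1)) Aᶜ).toReal := key
    _ < ε := by linarith

end Aux


/-- For continuous `F : P(S) → P(T)`, the Markov transitions `K_n(s,·) := F(ε_n(s))^{⊗n}`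
propagate chaos: if `{ρ_n}` is `p`-chaotic, then `∫ K_n(s,·) ρ_n(ds)` is `F(p)`-chaotic. -/
theorem stmt17 {S T : Type*} [MetricSpace S] [CompleteSpace S]
    [TopologicalSpace.SeparableSpace S] [MeasurableSpace S] [BorelSpace S]
    [MetricSpace T] [TopologicalSpace.SeparableSpace T] [MeasurableSpace T] [BorelSpace T]
    (F : ProbabilityMeasure S → ProbabilityMeasure T) (hF : Continuous F)
    (ρ : ∀ n, Measure (Fin n → S)) (hprob : ∀ n, IsProbabilityMeasure (ρ n))
    (hsym : ∀ n, IsSymmetricLaw (ρ n))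
    (p : ProbabilityMeasure S)
    (hchaos : IsChaotic ρ (p : Measure S)) :
    IsChaotic
      (fun n =>
        match n with
        | 0 => Measure.dirac (fun i : Fin 0 => i.elim0)
        | (m + 1) =>
            (ρ (m + 1)).bind
              (fun s => Measure.pi fun _ : Fin (m + 1) =>
                (F (empiricalPM (m + 1) s) : Measure T)))
      (F p : Measure T) := by
  classical
  intro k φ
  haveI : SecondCountableTopology S := UniformSpace.secondCountable_of_separable S
  haveI : SecondCountableTopology T := UniformSpace.secondCountable_of_separable T
  set Ψ : ProbabilityMeasure S → ℝ := fun μ => ∏ i, ∫ x, φ i x ∂(F μ : Measure T) with hΨdef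
  have hΨc : Continuous Ψ := continuous_finset_prod _ fun i _ =>
    (MeasureTheory.ProbabilityMeasure.continuous_integral_boundedContinuousFunction
      (φ i)).comp hF
  set C : ℝ := ∏ i, ‖φ i‖ with hCdef
  have hC0 : 0 ≤ C := Finset.prod_nonneg fun i _ => norm_nonneg _
  have hφbd : ∀ (i : Fin k) (ν : ProbabilityMeasure T),
      |∫ x, φ i x ∂(ν : Measure T)| ≤ ‖φ i‖ := by
    intro i ν
    have := norm_integral_le_of_norm_le_const (μ := (ν : Measure T))
      (f := fun x => φ i x) (C := ‖φ i‖) (ae_of_all _ fun x => (φ i).norm_coe_le_norm x)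
    simpa [measure_univ] using this
  have hC : ∀ μ, |Ψ μ| ≤ C := by
    intro μ
    rw [hΨdef, hCdef]
    calc |∏ i, ∫ x, φ i x ∂(F μ : Measure T)| = ∏ i, |∫ x, φ i x ∂(F μ : Measure T)| :=
        Finset.abs_prod _ _
      _ ≤ ∏ i, ‖φ i‖ := Finset.prod_le_prod (fun i _ => abs_nonneg _) fun i _ => hφbd i _
  have hkey : ∀ n : ℕ,
      (∫ t, ∏ i : Fin k, φ i (t (Fin.castLE (by omega) i))
          ∂((ρ (k + n + 1)).bind (fun s => Measure.pi fun _ : Fin (k + n + 1) =>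
            (F (empiricalPM (k + n + 1) s) : Measure T))))
        = ∫ s, Ψ (empiricalPM (k + n + 1) s) ∂ρ (k + n + 1) := by
    intro n
    haveI := hprob (k + n + 1)
    have hκm : Measurable (fun s : Fin (k + n + 1) → S =>
        Measure.pi fun _ : Fin (k + n + 1) => (F (empiricalPM (k + n + 1) s) : Measure T)) := by
      apply measurable_pi_of_prob
      apply measurable_toMeasure_of_forall_lintegral
      intro f
      exact ((continuous_lintegral_bcnn f).comp (hF.comp continuous_empiricalPM)).measurable
    have hhc : Continuous fun t : Fin (k + n + 1) → T =>
        ∏ i : Fin k, φ i (t (Fin.castLE (by omega) i)) :=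
      continuous_finset_prod _ fun i _ => (φ i).continuous.comp (continuous_apply _)
    have hhb : ∀ t : Fin (k + n + 1) → T,
        |∏ i : Fin k, φ i (t (Fin.castLE (by omega) i))| ≤ C := by
      intro t
      rw [hCdef]
      calc |∏ i : Fin k, φ i (t (Fin.castLE (by omega) i))|
          = ∏ i : Fin k, |φ i (t (Fin.castLE (by omega) i))| := Finset.abs_prod _ _
        _ ≤ ∏ i, ‖φ i‖ := Finset.prod_le_prod (fun i _ => abs_nonneg _)
            fun i _ => (φ i).norm_coe_le_norm _
    rw [integral_bind_of_bounded _ _ hκm (fun s => inferInstance) _ hhc.measurable C hC0 hhb]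
    refine integral_congr_ae (Filter.Eventually.of_forall fun s => ?_)
    exact integral_pi_prod_castLE (F (empiricalPM (k + n + 1) s) : Measure T)
      (by omega) φ
  have hmain := integral_comp_empirical_tendsto ρ p hprob hsym hchaos Ψ hΨc C hC
  set G : ℕ → ℝ := fun m => ∫ s, Ψ (empiricalPM (m + 1) s) ∂ρ (m + 1) with hGdef
  have hshift : Tendsto (fun n => G (k + n)) atTop (𝓝 (Ψ p)) := by
    have h2 := hmain.comp (tendsto_add_atTop_nat k)
    have h3 : (fun n => G (n + k)) = fun n => G (k + n) :=
      funext fun n => congrArg G (by omega)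
    exact h3 ▸ h2
  have hfinal : Tendsto (fun n => ∫ s, Ψ (empiricalPM (k + n + 1) s) ∂ρ (k + n + 1)) atTop
      (𝓝 (Ψ p)) := hshift
  exact hfinal.congr fun n => (hkey n).symm
end

section
/- Let S be a separable metric space. If ρ_n are symmetric laws on S^n and for each k, the k-marginals ρ_n^{(k)} converge weakly to ρ^{⊗k} in P(S^k), then {ρ_n} is ρ-chaotic; conversely, if {ρ_n} is ρ-chaotic, then each k-marginal converges weakly to ρ^{⊗k} (no completeness of S required). -/
open MeasureTheory Filter Topology BoundedContinuousFunction
open scoped ENNReal NNReal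

section AuxChaos
open Set


noncomputable def openApprox {S : Type*} [MetricSpace S] (U : Set S) (m : ℕ) : S →ᵇ ℝ :=
  BoundedContinuousFunction.const S 1 -
    (thickenedIndicator (δ := ((m : ℝ) + 1)⁻¹) (by positivity) Uᶜ).comp
      (↑· : ℝ≥0 → ℝ) (isometry_subtype_coe.lipschitz)

lemma openApprox_apply {S : Type*} [MetricSpace S] (U : Set S) (m : ℕ) (x : S) :
    openApprox U m x = 1 - (thickenedIndicator (δ := ((m : ℝ) + 1)⁻¹) (by positivity) Uᶜ x : ℝ) :=
  rfl

lemma openApprox_nonneg {S : Type*} [MetricSpace S] (U : Set S) (m : ℕ) (x : S) :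
    0 ≤ openApprox U m x := by
  rw [openApprox_apply]
  have := thickenedIndicator_le_one (δ := ((m : ℝ) + 1)⁻¹) (by positivity) Uᶜ x
  have : (thickenedIndicator (δ := ((m : ℝ) + 1)⁻¹) (by positivity) Uᶜ x : ℝ) ≤ 1 := by
    exact_mod_cast this
  linarith

lemma openApprox_le_one {S : Type*} [MetricSpace S] (U : Set S) (m : ℕ) (x : S) :
    openApprox U m x ≤ 1 := by
  rw [openApprox_apply]
  have : (0:ℝ) ≤ (thickenedIndicator (δ := ((m : ℝ) + 1)⁻¹) (by positivity) Uᶜ x : ℝ) :=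
    (thickenedIndicator (δ := ((m : ℝ) + 1)⁻¹) (by positivity) Uᶜ x).coe_nonneg
  linarith

lemma openApprox_eq_zero {S : Type*} [MetricSpace S] {U : Set S} (m : ℕ) {x : S} (hx : x ∉ U) :
    openApprox U m x = 0 := by
  have h1 := thickenedIndicator_one_of_mem_closure (δ := ((m:ℝ)+1)⁻¹) (by positivity) (E := Uᶜ)
    (subset_closure (by simpa using hx))
  rw [openApprox_apply, h1]
  simp

lemma openApprox_mono {S : Type*} [MetricSpace S] (U : Set S) {m m' : ℕ} (h : m ≤ m') (x : S) :
    openApprox U m x ≤ openApprox U m' x := by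
  rw [openApprox_apply, openApprox_apply]
  have hle : ((m' : ℝ) + 1)⁻¹ ≤ ((m : ℝ) + 1)⁻¹ := by
    apply inv_anti₀ (by positivity)
    exact_mod_cast by omega
  have := thickenedIndicator_mono (δ₁ := ((m' : ℝ) + 1)⁻¹) (δ₂ := ((m : ℝ) + 1)⁻¹)
    (by positivity) (by positivity) hle Uᶜ x
  have : (thickenedIndicator (δ := ((m' : ℝ) + 1)⁻¹) (by positivity) Uᶜ x : ℝ)
      ≤ (thickenedIndicator (δ := ((m : ℝ) + 1)⁻¹) (by positivity) Uᶜ x : ℝ) := by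
    exact_mod_cast this
  linarith

lemma openApprox_tendsto {S : Type*} [MetricSpace S] {U : Set S} (hU : IsOpen U) (x : S) :
    Tendsto (fun m => openApprox U m x) atTop (𝓝 (U.indicator (fun _ => (1:ℝ)) x)) := by
  have hδ : Tendsto (fun m : ℕ => ((m : ℝ) + 1)⁻¹) atTop (𝓝 0) :=
    tendsto_one_div_add_atTop_nhds_zero_nat.congr (by intro n; simp [one_div])
  have key := thickenedIndicator_tendsto_indicator_closure
    (δseq := fun m : ℕ => ((m : ℝ) + 1)⁻¹) (fun m => by positivity) hδ (Uᶜ)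
  rw [tendsto_pi_nhds] at key
  have key2 := NNReal.tendsto_coe.mpr (key x)
  have hcl : closure Uᶜ = Uᶜ := hU.isClosed_compl.closure_eq
  simp only [openApprox_apply]
  have : (U.indicator (fun _ => (1:ℝ)) x) = 1 - ((closure Uᶜ).indicator (fun _ => (1:ℝ≥0)) x : ℝ) := by
    rw [hcl]
    by_cases hx : x ∈ U <;> simp [hx, indicator_of_mem, indicator_of_notMem]
  rw [this]
  refine tendsto_const_nhds.sub ?_
  convert key2 using 2
  by_cases hx : x ∈ closure Uᶜ <;> simp [hx]


lemma bcf_prod_apply {α : Type*} [TopologicalSpace α] {ι : Type*} (s : Finset ι)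
    (f : ι → α →ᵇ ℝ) (x : α) : (∏ j ∈ s, f j) x = ∏ j ∈ s, f j x := by
  classical
  induction s using Finset.cons_induction with
  | empty => simp
  | cons a s ha ih => rw [Finset.prod_cons, Finset.prod_cons, mul_apply, ih]

section
variable {S : Type*} [MetricSpace S] [TopologicalSpace.SeparableSpace S]
  [MeasurableSpace S] [BorelSpace S] {k : ℕ}

noncomputable def prodBCF (h : Fin k → (S →ᵇ ℝ)) : (Fin k → S) →ᵇ ℝ :=
  ∏ i, (h i).compContinuous ⟨fun x => x i, continuous_apply i⟩

set_option linter.unusedSectionVars false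

lemma prodBCF_apply (h : Fin k → (S →ᵇ ℝ)) (x : Fin k → S) :
    prodBCF h x = ∏ i, h i (x i) := by
  simp [prodBCF, bcf_prod_apply]

lemma integrable_W (ν : Measure (Fin k → S)) [IsProbabilityMeasure ν]
    (h : Fin k → (S →ᵇ ℝ)) (f : ℕ → Fin k → (S →ᵇ ℝ)) (M : ℕ) :
    Integrable (fun x => (∏ i, h i (x i)) * ∏ j ∈ Finset.range M, (1 - ∏ i, f j i (x i))) ν := by
  haveI : SecondCountableTopology S := UniformSpace.secondCountable_of_separable S
  have : (fun (x : Fin k → S) =>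
      (∏ i, h i (x i)) * ∏ j ∈ Finset.range M, (1 - ∏ i, f j i (x i)))
      = ⇑(prodBCF h * ∏ j ∈ Finset.range M, (1 - prodBCF (f j))) := by
    ext x
    rw [mul_apply, prodBCF_apply, bcf_prod_apply]
    congr 1
    refine Finset.prod_congr rfl fun j _ => ?_
    rw [BoundedContinuousFunction.sub_apply, prodBCF_apply, BoundedContinuousFunction.coe_one, Pi.one_apply]
  rw [this]
  exact (prodBCF h * ∏ j ∈ Finset.range M, (1 - prodBCF (f j))).integrable ν

lemma tendsto_integral_W {μs : ℕ → Measure (Fin k → S)} [∀ n, IsProbabilityMeasure (μs n)]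
    {μ : Measure (Fin k → S)} [IsProbabilityMeasure μ]
    (hprod : ∀ f : Fin k → (S →ᵇ ℝ), Tendsto (fun n => ∫ x, ∏ i, f i (x i) ∂ μs n)
      atTop (𝓝 (∫ x, ∏ i, f i (x i) ∂ μ)))
    (M : ℕ) (f : ℕ → Fin k → (S →ᵇ ℝ)) : ∀ (h : Fin k → (S →ᵇ ℝ)),
    Tendsto (fun n => ∫ x, (∏ i, h i (x i)) * ∏ j ∈ Finset.range M, (1 - ∏ i, f j i (x i)) ∂ μs n)
      atTop
      (𝓝 (∫ x, (∏ i, h i (x i)) * ∏ j ∈ Finset.range M, (1 - ∏ i, f j i (x i)) ∂ μ)) := by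
  induction M with
  | zero => intro h; simpa using hprod h
  | succ M ih =>
    intro h
    have hrw : ∀ (x : Fin k → S),
        (∏ i, h i (x i)) * ∏ j ∈ Finset.range (M+1), (1 - ∏ i, f j i (x i))
        = ((∏ i, h i (x i)) * ∏ j ∈ Finset.range M, (1 - ∏ i, f j i (x i)))
          - ((∏ i, (h i * f M i) (x i)) * ∏ j ∈ Finset.range M, (1 - ∏ i, f j i (x i))) := by
      intro x
      simp only [Finset.prod_range_succ, mul_apply, Finset.prod_mul_distrib]
      ring
    have key : ∀ (ν : Measure (Fin k → S)), IsProbabilityMeasure ν →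
        ∫ x, (∏ i, h i (x i)) * ∏ j ∈ Finset.range (M+1), (1 - ∏ i, f j i (x i)) ∂ ν
        = (∫ x, (∏ i, h i (x i)) * ∏ j ∈ Finset.range M, (1 - ∏ i, f j i (x i)) ∂ ν)
          - ∫ x, (∏ i, (h i * f M i) (x i)) * ∏ j ∈ Finset.range M, (1 - ∏ i, f j i (x i)) ∂ ν := by
      intro ν hν
      rw [← integral_sub (integrable_W ν h f M) (integrable_W ν (fun i => h i * f M i) f M)]
      exact integral_congr_ae (Eventually.of_forall fun x => hrw x)
    have e1 : ∀ n, ∫ x, (∏ i, h i (x i)) * ∏ j ∈ Finset.range (M+1), (1 - ∏ i, f j i (x i)) ∂ μs n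
        = (∫ x, (∏ i, h i (x i)) * ∏ j ∈ Finset.range M, (1 - ∏ i, f j i (x i)) ∂ μs n)
          - ∫ x, (∏ i, (h i * f M i) (x i)) * ∏ j ∈ Finset.range M, (1 - ∏ i, f j i (x i)) ∂ μs n :=
      fun n => key (μs n) inferInstance
    simp only [e1, key μ inferInstance]
    exact (ih h).sub (ih (fun i => h i * f M i))
end

section
variable {S : Type*} [MetricSpace S] [TopologicalSpace.SeparableSpace S]
  [MeasurableSpace S] [BorelSpace S] {k : ℕ}
set_option linter.unusedSectionVars false

lemma boxes_le_liminf {μs : ℕ → Measure (Fin k → S)} [∀ n, IsProbabilityMeasure (μs n)]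
    {μ : Measure (Fin k → S)} [IsProbabilityMeasure μ]
    (hprod : ∀ f : Fin k → (S →ᵇ ℝ), Tendsto (fun n => ∫ x, ∏ i, f i (x i) ∂ μs n)
      atTop (𝓝 (∫ x, ∏ i, f i (x i) ∂ μ)))
    {G : Set (Fin k → S)} (hG : IsOpen G) (M : ℕ) (U : ℕ → Fin k → Set S)
    (hUo : ∀ j i, IsOpen (U j i)) (hsub : ∀ j, univ.pi (U j) ⊆ G) :
    (μ (⋃ j ∈ Finset.range M, univ.pi (U j))).toReal
      ≤ liminf (fun n => (μs n G).toReal) atTop := by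
  haveI : SecondCountableTopology S := UniformSpace.secondCountable_of_separable S
  classical
  set B : Set (Fin k → S) := ⋃ j ∈ Finset.range M, univ.pi (U j) with hB
  have hBopen : IsOpen B := by
    apply isOpen_biUnion
    intro j _
    exact isOpen_set_pi finite_univ (fun i _ => hUo j i)
  have hBG : B ⊆ G := iUnion₂_subset fun j _ => hsub j
  -- the approximating functions
  set w : ℕ → (Fin k → S) → ℝ :=
    fun m x => ∏ j ∈ Finset.range M, (1 - ∏ i, openApprox (U j i) m (x i)) with hw
  set F : ℕ → (Fin k → S) → ℝ := fun m x => 1 - w m x with hF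
  have hprod01 : ∀ j m (x : Fin k → S),
      0 ≤ (∏ i, openApprox (U j i) m (x i)) ∧ (∏ i, openApprox (U j i) m (x i)) ≤ 1 := by
    intro j m x
    constructor
    · exact Finset.prod_nonneg fun i _ => openApprox_nonneg _ _ _
    · exact Finset.prod_le_one (fun i _ => openApprox_nonneg _ _ _)
        (fun i _ => openApprox_le_one _ _ _)
  have hw01 : ∀ m x, 0 ≤ w m x ∧ w m x ≤ 1 := by
    intro m x
    constructor
    · exact Finset.prod_nonneg fun j _ => by linarith [(hprod01 j m x).2]
    · exact Finset.prod_le_one (fun j _ => by linarith [(hprod01 j m x).2])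
        (fun j _ => by linarith [(hprod01 j m x).1])
  have hwout : ∀ m x, x ∉ G → w m x = 1 := by
    intro m x hx
    apply Finset.prod_eq_one
    intro j _
    have hxj : x ∉ univ.pi (U j) := fun hmem => hx (hsub j hmem)
    obtain ⟨i, hi⟩ := not_forall.mp (by simpa [Set.mem_univ_pi] using hxj)
    have hzero : (∏ i, openApprox (U j i) m (x i)) = 0 :=
      Finset.prod_eq_zero (Finset.mem_univ i) (openApprox_eq_zero m hi)
    rw [hzero, sub_zero]
  have hwanti : ∀ x, Antitone fun m => w m x := by
    intro x m m' hmm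
    apply Finset.prod_le_prod
    · intro j _; linarith [(hprod01 j m' x).2]
    · intro j _
      have : (∏ i, openApprox (U j i) m (x i)) ≤ ∏ i, openApprox (U j i) m' (x i) :=
        Finset.prod_le_prod (fun i _ => openApprox_nonneg _ _ _)
          (fun i _ => openApprox_mono _ hmm _)
      linarith
  have hwtend : ∀ x, Tendsto (fun m => w m x) atTop (𝓝 (1 - B.indicator (fun _ => (1:ℝ)) x)) := by
    intro x
    have h1 : Tendsto (fun m => w m x) atTop
        (𝓝 (∏ j ∈ Finset.range M, (1 - ∏ i, (U j i).indicator (fun _ => (1:ℝ)) (x i)))) := by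
      apply tendsto_finset_prod
      intro j _
      apply Tendsto.const_sub
      exact tendsto_finset_prod _ fun i _ => openApprox_tendsto (hUo j i) (x i)
    have h2 : (∏ j ∈ Finset.range M, (1 - ∏ i, (U j i).indicator (fun _ => (1:ℝ)) (x i)))
        = 1 - B.indicator (fun _ => (1:ℝ)) x := by
      by_cases hx : x ∈ B
      · obtain ⟨j, hjM, hxj⟩ := by simpa [hB, Set.mem_iUnion] using hx
        rw [indicator_of_mem hx]
        rw [Finset.prod_eq_zero (Finset.mem_range.mpr hjM)]
        · norm_num
        · have : ∀ i, (U j i).indicator (fun _ => (1:ℝ)) (x i) = 1 := fun i =>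
            indicator_of_mem (hxj i) _
          simp [this]
      · rw [indicator_of_notMem hx, sub_zero]
        apply Finset.prod_eq_one
        intro j hj
        have hxj : x ∉ univ.pi (U j) := fun hmem => hx (mem_biUnion hj hmem)
        obtain ⟨i, hi⟩ := not_forall.mp (by simpa [Set.mem_univ_pi] using hxj)
        have hzero : (∏ i, (U j i).indicator (fun _ => (1:ℝ)) (x i)) = 0 :=
          Finset.prod_eq_zero (Finset.mem_univ i) (indicator_of_notMem hi _)
        rw [hzero, sub_zero]
    rw [← h2]
    exact h1
  -- integrability
  have hint_w : ∀ (ν : Measure (Fin k → S)), IsProbabilityMeasure ν → ∀ m,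
      Integrable (w m) ν := by
    intro ν hν m
    have h := integrable_W ν (fun _ => 1) (fun j i => openApprox (U j i) m) M
    refine h.congr (Eventually.of_forall fun x => ?_)
    simp [hw, BoundedContinuousFunction.coe_one]
  have hint_F : ∀ (ν : Measure (Fin k → S)), IsProbabilityMeasure ν → ∀ m,
      Integrable (F m) ν := fun ν hν m => (integrable_const 1).sub (hint_w ν hν m)
  -- convergence in n for fixed m
  have hFtend : ∀ m, Tendsto (fun n => ∫ x, F m x ∂ μs n) atTop (𝓝 (∫ x, F m x ∂ μ)) := by
    intro m
    have h := tendsto_integral_W hprod M (fun j i => openApprox (U j i) m) (fun _ => 1)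
    have hcongr : ∀ (ν : Measure (Fin k → S)),
        ∫ x, (∏ i, (1 : S →ᵇ ℝ) (x i)) * ∏ j ∈ Finset.range M,
          (1 - ∏ i, openApprox (U j i) m (x i)) ∂ ν = ∫ x, w m x ∂ ν := by
      intro ν
      refine integral_congr_ae (Eventually.of_forall fun x => ?_)
      simp [hw, BoundedContinuousFunction.coe_one]
    simp only [hcongr] at h
    have hFeq : ∀ (ν : Measure (Fin k → S)), IsProbabilityMeasure ν →
        ∫ x, F m x ∂ ν = 1 - ∫ x, w m x ∂ ν := by
      intro ν hν
      rw [hF]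
      simp only
      rw [integral_sub (integrable_const 1) (hint_w ν hν m), integral_const]
      simp
    have e1 : ∀ n, ∫ x, F m x ∂ μs n = 1 - ∫ x, w m x ∂ μs n :=
      fun n => hFeq (μs n) inferInstance
    simp only [e1, hFeq μ inferInstance]
    exact h.const_sub 1
  -- bounds
  have hF01 : ∀ m x, 0 ≤ F m x ∧ F m x ≤ 1 := by
    intro m x
    constructor
    · simp only [hF]; linarith [(hw01 m x).2]
    · simp only [hF]; linarith [(hw01 m x).1]
  have hFle : ∀ m x, F m x ≤ G.indicator (fun _ => (1:ℝ)) x := by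
    intro m x
    by_cases hx : x ∈ G
    · rw [indicator_of_mem hx]; exact (hF01 m x).2
    · rw [indicator_of_notMem hx, hF, ]
      simp only
      rw [hwout m x hx]
      norm_num
  set L := liminf (fun n => (μs n G).toReal) atTop with hL
  -- step inequality in n
  have hstep : ∀ m, ∫ x, F m x ∂ μ ≤ L := by
    intro m
    have hμlim : ∫ x, F m x ∂ μ = liminf (fun n => ∫ x, F m x ∂ μs n) atTop :=
      ((hFtend m).liminf_eq).symm
    rw [hμlim, hL]
    apply liminf_le_liminf
    · apply Eventually.of_forall
      intro n
      calc ∫ x, F m x ∂ μs n ≤ ∫ x, G.indicator (fun _ => (1:ℝ)) x ∂ μs n := by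
            apply integral_mono (hint_F (μs n) inferInstance m)
              ((integrable_const (1:ℝ)).indicator hG.measurableSet)
            intro x
            exact hFle m x
        _ = (μs n G).toReal := by
            rw [integral_indicator_const (1:ℝ) hG.measurableSet, smul_eq_mul, mul_one]; rfl
    · exact (hFtend m).isBoundedUnder_ge
    · apply IsBoundedUnder.isCoboundedUnder_ge
      apply Filter.isBoundedUnder_of
      refine ⟨1, fun n => ?_⟩
      have h1 : (μs n) G ≤ 1 := prob_le_one (μ := μs n) (s := G)
      have := ENNReal.toReal_mono ENNReal.one_ne_top h1
      simpa using this
  -- monotone convergence in m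
  have hmono : Tendsto (fun m => ∫ x, F m x ∂ μ) atTop (𝓝 (∫ x, B.indicator (fun _ => (1:ℝ)) x ∂ μ)) := by
    apply integral_tendsto_of_tendsto_of_monotone
      (fun m => hint_F μ inferInstance m)
      ((integrable_const (1:ℝ)).indicator hBopen.measurableSet)
    · apply Eventually.of_forall
      intro x m m' hmm
      simp only [hF]
      have := hwanti x hmm
      linarith [hwanti x hmm]
    · apply Eventually.of_forall
      intro x
      have := (hwtend x).const_sub 1
      simp only [hF]
      convert this using 2
      ring
  have hBval : ∫ x, B.indicator (fun _ => (1:ℝ)) x ∂ μ = (μ B).toReal := by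
    rw [integral_indicator_const (1:ℝ) hBopen.measurableSet, smul_eq_mul, mul_one]; rfl
  rw [← hBval]
  exact le_of_tendsto hmono (Eventually.of_forall hstep)
end

section
variable {S : Type*} [MetricSpace S] [TopologicalSpace.SeparableSpace S]
  [MeasurableSpace S] [BorelSpace S] {k : ℕ}
set_option linter.unusedSectionVars false

lemma isOpen_le_liminf_real {μs : ℕ → Measure (Fin k → S)} [∀ n, IsProbabilityMeasure (μs n)]
    {μ : Measure (Fin k → S)} [IsProbabilityMeasure μ]
    (hprod : ∀ f : Fin k → (S →ᵇ ℝ), Tendsto (fun n => ∫ x, ∏ i, f i (x i) ∂ μs n)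
      atTop (𝓝 (∫ x, ∏ i, f i (x i) ∂ μ)))
    {G : Set (Fin k → S)} (hG : IsOpen G) :
    (μ G).toReal ≤ liminf (fun n => (μs n G).toReal) atTop := by
  haveI : SecondCountableTopology S := UniformSpace.secondCountable_of_separable S
  classical
  have hLnonneg : (0:ℝ) ≤ liminf (fun n => (μs n G).toReal) atTop := by
    refine le_liminf_of_le (IsBoundedUnder.isCoboundedUnder_ge ?_)
      (Eventually.of_forall fun n => ENNReal.toReal_nonneg)
    apply Filter.isBoundedUnder_of
    refine ⟨1, fun n => ?_⟩
    have h1 : (μs n) G ≤ 1 := prob_le_one (μ := μs n) (s := G)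
    have := ENNReal.toReal_mono ENNReal.one_ne_top h1
    simpa using this
  by_cases hGemp : G = ∅
  · simpa [hGemp] using hLnonneg
  -- cover G by countably many open boxes
  set ι := {U : Fin k → Set S // (∀ i, IsOpen (U i)) ∧ univ.pi U ⊆ G} with hι
  have hcover : G = ⋃ (u : ι), univ.pi u.1 := by
    apply subset_antisymm
    · intro x hx
      obtain ⟨u, hu, hsub⟩ := isOpen_pi_iff'.mp hG x hx
      exact mem_iUnion.mpr ⟨⟨u, fun i => (hu i).1, hsub⟩, fun i _ => (hu i).2⟩
    · exact iUnion_subset fun u => u.2.2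
  obtain ⟨T, hTc, hTeq⟩ := TopologicalSpace.isOpen_iUnion_countable
    (fun u : ι => univ.pi u.1) (fun u => isOpen_set_pi finite_univ fun i _ => u.2.1 i)
  have hTne : T.Nonempty := by
    rcases Set.nonempty_iff_ne_empty.mpr hGemp with ⟨x, hx⟩
    rw [hcover, ← hTeq] at hx
    obtain ⟨u, hu, -⟩ := mem_iUnion₂.mp hx
    exact ⟨u, hu⟩
  obtain ⟨e, he⟩ := hTc.exists_eq_range hTne
  set V : ℕ → Fin k → Set S := fun m => (e m).1 with hV
  have hGeq : G = ⋃ m, univ.pi (V m) := by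
    rw [hcover, ← hTeq, he]
    simp [hV]
  set A : ℕ → Set (Fin k → S) := fun M => ⋃ j ∈ Finset.range M, univ.pi (V j) with hA
  have hAmono : Monotone A := by
    intro M M' h
    apply iUnion₂_subset
    intro j hj
    intro x hx
    simp only [hA, mem_iUnion]
    exact ⟨j, Finset.mem_range.mpr (lt_of_lt_of_le (Finset.mem_range.mp hj) h), hx⟩
  have hAunion : ⋃ M, A M = G := by
    rw [hGeq]
    apply subset_antisymm
    · exact iUnion_subset fun M => iUnion₂_subset fun j _ => subset_iUnion (fun m => univ.pi (V m)) j
    · intro x hx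
      obtain ⟨j, hj⟩ := mem_iUnion.mp hx
      exact mem_iUnion.mpr ⟨j+1, mem_biUnion (Finset.self_mem_range_succ j) hj⟩
  have htend : Tendsto (fun M => μ (A M)) atTop (𝓝 (μ G)) := by
    have := tendsto_measure_iUnion_atTop (μ := μ) hAmono
    rwa [hAunion] at this
  have htendR : Tendsto (fun M => (μ (A M)).toReal) atTop (𝓝 ((μ G).toReal)) :=
    (ENNReal.tendsto_toReal (measure_ne_top μ G)).comp htend
  apply le_of_tendsto htendR
  apply Eventually.of_forall
  intro M
  exact boxes_le_liminf hprod hG M V (fun j i => (e j).2.1 i) (fun j => (e j).2.2)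
end

section
variable {S : Type*} [MetricSpace S] [TopologicalSpace.SeparableSpace S]
  [SecondCountableTopology S] [MeasurableSpace S] [BorelSpace S] {k : ℕ}
set_option linter.unusedSectionVars false

lemma tendsto_pm_of_prod {μs : ℕ → ProbabilityMeasure (Fin k → S)}
    {μ : ProbabilityMeasure (Fin k → S)}
    (hprod : ∀ f : Fin k → (S →ᵇ ℝ),
      Tendsto (fun n => ∫ x, ∏ i, f i (x i) ∂ (μs n : Measure (Fin k → S)))
        atTop (𝓝 (∫ x, ∏ i, f i (x i) ∂ (μ : Measure (Fin k → S))))) :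
    Tendsto μs atTop (𝓝 μ) := by
  apply MeasureTheory.tendsto_of_forall_isOpen_le_liminf
  intro G hG
  have hreal : ((μ : Measure (Fin k → S)) G).toReal
      ≤ liminf (fun n => ((μs n : Measure (Fin k → S)) G).toReal) atTop :=
    isOpen_le_liminf_real hprod hG
  -- convert to ℝ≥0
  have hbdd : ∀ n, μs n G ≤ 1 := fun n => (μs n).apply_le_one G
  have hcoe : ((liminf (fun n => μs n G) atTop : ℝ≥0) : ℝ)
      = liminf (fun n => ((μs n G : ℝ≥0) : ℝ)) atTop := by
    refine Monotone.map_liminf_of_continuousAt (F := atTop) NNReal.coe_mono (fun n => μs n G)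
      NNReal.continuous_coe.continuousAt ?_ ?_
    · apply IsBoundedUnder.isCoboundedUnder_ge
      apply Filter.isBoundedUnder_of
      exact ⟨1, fun n => hbdd n⟩
    · apply Filter.isBoundedUnder_of
      exact ⟨0, fun n => by simp⟩
  rw [← NNReal.coe_le_coe, hcoe]
  have hcoe2 : ∀ (ν : ProbabilityMeasure (Fin k → S)),
      ((ν G : ℝ≥0) : ℝ) = ((ν : Measure (Fin k → S)) G).toReal := by
    intro ν
    rw [ProbabilityMeasure.coeFn_def]
    exact ENNReal.coe_toNNReal_eq_toReal _
  simp only [hcoe2]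
  exact hreal
end

lemma integral_pi_prod_bcf {S : Type*} [MetricSpace S] [MeasurableSpace S] [BorelSpace S] {k : ℕ}
    (p : Measure S) [IsProbabilityMeasure p] (f : Fin k → (S →ᵇ ℝ)) :
    ∫ x, ∏ i, f i (x i) ∂(Measure.pi fun _ : Fin k => p) = ∏ i, ∫ y, f i y ∂p := by
  letI : MeasureSpace S := { volume := p }
  have h := MeasureTheory.integral_fintype_prod_eq_prod (𝕜 := ℝ) (ι := Fin k)
    (f := fun i x => f i x) (μ := fun _ => p)
  exact h

end AuxChaos

/-- On a separable metric space, `{ρ_n}` is `ρ`-chaotic iff for each `k` the `k`-marginals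
converge weakly to `ρ^{⊗k}`. -/
theorem stmt19 {S : Type*} [MetricSpace S] [TopologicalSpace.SeparableSpace S]
    [MeasurableSpace S] [BorelSpace S]
    (ρ : ∀ n, Measure (Fin n → S)) (hprob : ∀ n, IsProbabilityMeasure (ρ n))
    (hsym : ∀ n, IsSymmetricLaw (ρ n))
    (p : Measure S) [IsProbabilityMeasure p] :
    (∀ (k : ℕ) (ψ : ((Fin k → S)) →ᵇ ℝ),
      Tendsto
        (fun n => ∫ s, ψ (fun i : Fin k => s (Fin.castLE (by omega) i)) ∂ (ρ (k + n + 1)))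
        atTop (𝓝 (∫ y, ψ y ∂ (Measure.pi fun _ : Fin k => p))))
    ↔ IsChaotic ρ p := by
  haveI := fun n => hprob n
  haveI : SecondCountableTopology S := UniformSpace.secondCountable_of_separable S
  constructor
  · -- marginals converge ⟹ chaotic
    intro h k φ
    have h1 := h k (prodBCF φ)
    have h2 : ∫ y, prodBCF φ y ∂(Measure.pi fun _ : Fin k => p) = ∏ i, ∫ x, φ i x ∂ p := by
      rw [← integral_pi_prod_bcf p φ]
      exact integral_congr_ae (Filter.Eventually.of_forall fun x => prodBCF_apply φ x)
    rw [h2] at h1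
    convert h1 using 2 with n
    refine integral_congr_ae (Filter.Eventually.of_forall fun s => ?_)
    simp [prodBCF_apply]
  · -- chaotic ⟹ marginals converge
    intro hchaos k ψ
    have hcont : Continuous fun (x : Fin k → S) => (ψ : (Fin k → S) → ℝ) x := ψ.continuous
    set T : ∀ n : ℕ, (Fin (k+n+1) → S) → (Fin k → S) :=
      fun n s (i : Fin k) => s (Fin.castLE (by omega) i) with hT
    have hTm : ∀ n, Measurable (T n) :=
      fun n => measurable_pi_lambda _ fun i => measurable_pi_apply _
    set ms : ℕ → Measure (Fin k → S) := fun n => (ρ (k+n+1)).map (T n) with hms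
    haveI hmsP : ∀ n, IsProbabilityMeasure (ms n) :=
      fun n => Measure.isProbabilityMeasure_map (hTm n).aemeasurable
    set m : Measure (Fin k → S) := Measure.pi fun _ => p with hm
    haveI : IsProbabilityMeasure m := by rw [hm]; infer_instance
    have hprod : ∀ f : Fin k → (S →ᵇ ℝ),
        Tendsto (fun n => ∫ x, ∏ i, f i (x i) ∂ ms n) atTop
          (𝓝 (∫ x, ∏ i, f i (x i) ∂ m)) := by
      intro f
      have hc : ∀ n : ℕ, AEStronglyMeasurable (fun x : Fin k → S => ∏ i, f i (x i))
          ((ρ (k+n+1)).map (T n)) := by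
        intro n
        exact (Continuous.aestronglyMeasurable (by
          exact continuous_finset_prod _ fun i _ => (f i).continuous.comp (continuous_apply i)))
      have h1 : ∀ n, ∫ x, ∏ i, f i (x i) ∂ ms n
          = ∫ s, ∏ i, f i (s (Fin.castLE (by omega) i)) ∂ ρ (k+n+1) := by
        intro n
        rw [hms]
        rw [integral_map (hTm n).aemeasurable (hc n)]
      have h2 : ∫ x, ∏ i, f i (x i) ∂ m = ∏ i, ∫ x, f i x ∂ p := integral_pi_prod_bcf p f
      simp only [h1, h2]
      exact hchaos k f
    set msP : ℕ → ProbabilityMeasure (Fin k → S) := fun n => ⟨ms n, hmsP n⟩ with hmsPdef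
    set mP : ProbabilityMeasure (Fin k → S) := ⟨m, inferInstance⟩ with hmPdef
    have htend : Tendsto msP atTop (𝓝 mP) := tendsto_pm_of_prod hprod
    have h2 := ProbabilityMeasure.tendsto_iff_forall_integral_tendsto.mp htend ψ
    have h3 : ∀ n, ∫ x, ψ x ∂ (msP n : Measure (Fin k → S))
        = ∫ s, ψ (fun i : Fin k => s (Fin.castLE (by omega) i)) ∂ ρ (k+n+1) := by
      intro n
      have : (msP n : Measure (Fin k → S)) = ms n := rfl
      rw [this, hms, integral_map (hTm n).aemeasurable hcont.aestronglyMeasurable]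
    simp only [h3] at h2
    exact h2
end
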